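/- arXiv:1307.5919 — 7 statements merged into one kernel-verified Lean document; each statement's English description precedes it below -/
import Mathlib

section
/- For any finite graph H without isolated vertices and any odd integer k ≥ 5, hom(C_k, H)^{1/k} ≤ hom(C_{k-1}, H)^{1/(k-1)}. -/
open Finset

/-- Number of graph homomorphisms from the (loopless or looped) graph given by
relation `G` on `U` to the graph given by relation `H` on `V`. -/
def HomCount {U V : Type*} [Fintype U] [DecidableEq U] [Fintype V] [DecidableEq V]
    (G : U → U → Prop) [DecidableRel G] (H : V → V → Prop) [DecidableRel H] : ℕ :=
  Fintype.card {f : U → V // ∀ a b, G a b → H (f a) (f b)}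

/-- Degree of a vertex in a graph with loops (a loop counts once). -/
def hdeg {V : Type*} [Fintype V] (H : V → V → Prop) [DecidableRel H] (v : V) : ℕ :=
  (Finset.univ.filter (H v)).card

/-- Adjacency matrix (over ℝ) of the graph with loops given by `H`. -/
def adjMat {V : Type*} [Fintype V] (H : V → V → Prop) [DecidableRel H] : Matrix V V ℝ :=
  fun i j => if H i j then 1 else 0

/-- Adjacency relation of the cycle `C_k` on vertex set `Fin k` (for `k ≥ 3`). -/
def cycAdj (k : ℕ) (i j : Fin k) : Prop :=
  (i.val + 1) % k = j.val ∨ (j.val + 1) % k = i.val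

instance (k : ℕ) : DecidableRel (cycAdj k) := fun i j => by
  unfold cycAdj; infer_instance

/-- Adjacency relation of the path `P_k` on vertex set `Fin k`. -/
def pathAdj (k : ℕ) (i j : Fin k) : Prop :=
  i.val + 1 = j.val ∨ j.val + 1 = i.val

instance (k : ℕ) : DecidableRel (pathAdj k) := fun i j => by
  unfold pathAdj; infer_instance

/-- Adjacency relation of the star `K_{1,x-1}` on `Fin x`, with center `0`. -/
def starAdj (x : ℕ) (i j : Fin x) : Prop :=
  (i.val = 0 ∧ j.val ≠ 0) ∨ (j.val = 0 ∧ i.val ≠ 0)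

instance (x : ℕ) : DecidableRel (starAdj x) := fun i j => by
  unfold starAdj; infer_instance

/-! With `A` the (symmetric) adjacency matrix of `H` and `λ` its eigenvalues,
`hom(C_n, H) = tr (A ^ n) = ∑ λᵢ ^ n`. As `k - 1` is even, `hom(C_{k-1}, H) = ∑ |λᵢ| ^ (k - 1)`,
while `hom(C_k, H) ≤ ∑ |λᵢ| ^ k`; so the claim is `‖λ‖ₖ ≤ ‖λ‖ₖ₋₁`, which follows from
`∑ |λᵢ| ^ k ≤ max |λᵢ| · ∑ |λᵢ| ^ (k - 1)` and `max |λᵢ| ^ (k - 1) ≤ ∑ |λᵢ| ^ (k - 1)`. -/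

namespace Matrix

variable {V R : Type*} [Fintype V] [DecidableEq V] [CommSemiring R]

-- `g` lists the interior vertices of a walk `i, g 0, …, g (n - 1), j`; its edge `t` joins
-- `Fin.cons i g t` to `Fin.snoc g j t`.
theorem pow_succ_apply_eq_sum_walks (A : Matrix V V R) (n : ℕ) (i j : V) :
    (A ^ (n + 1)) i j = ∑ g : Fin n → V, ∏ t : Fin (n + 1),
      A ((Fin.cons i g : Fin (n + 1) → V) t) ((Fin.snoc g j : Fin (n + 1) → V) t) := by
  induction n generalizing i with
  | zero => simp [Fin.snoc]
  | succ n ih =>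
    rw [pow_succ', mul_apply, ← (Fin.consEquiv fun _ => V).sum_comp, Fintype.sum_prod_type]
    refine Finset.sum_congr rfl fun l _ => ?_
    simp [ih, Fin.prod_univ_succ, Fin.consEquiv, ← Fin.cons_snoc_eq_snoc_cons, Finset.mul_sum]

theorem trace_pow_succ_eq_sum_cyclic_prod (A : Matrix V V R) (n : ℕ) :
    (A ^ (n + 1)).trace = ∑ f : Fin (n + 1) → V, ∏ t, A (f t) (f (t + 1)) := by
  rw [← (Fin.consEquiv fun _ => V).sum_comp, Fintype.sum_prod_type]
  refine Finset.sum_congr rfl fun i _ => ?_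
  simp [pow_succ_apply_eq_sum_walks, Fin.snoc_eq_cons_rotate]

theorem IsHermitian.trace_pow_eq_sum_eigenvalues_pow {𝕜 : Type*} [RCLike 𝕜] {A : Matrix V V 𝕜}
    (hA : A.IsHermitian) (n : ℕ) : (A ^ n).trace = ∑ i, (hA.eigenvalues i : 𝕜) ^ n := by
  conv_lhs => rw [hA.spectral_theorem, ← map_pow, Unitary.conjStarAlgAut_apply]
  rw [trace_mul_cycle, Unitary.coe_star_mul_self, one_mul, diagonal_pow, trace_diagonal]
  simp

end Matrix

theorem cycAdj_succ_iff {m : ℕ} (a b : Fin (m + 1)) :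
    cycAdj (m + 1) a b ↔ b = a + 1 ∨ a = b + 1 := by
  simp only [cycAdj, Fin.ext_iff, Fin.val_add, Fin.val_one', Nat.add_mod_mod, eq_comm]

theorem forall_cycAdj_imp_iff {V : Type*} {H : V → V → Prop} (hsym : ∀ a b, H a b → H b a)
    {m : ℕ} (g : Fin (m + 1) → V) :
    (∀ a b, cycAdj (m + 1) a b → H (g a) (g b)) ↔ ∀ t, H (g t) (g (t + 1)) := by
  refine ⟨fun h t => h t (t + 1) ((cycAdj_succ_iff _ _).2 (.inl rfl)), fun h a b hab => ?_⟩
  rcases (cycAdj_succ_iff a b).1 hab with rfl | rfl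
  exacts [h a, hsym _ _ (h b)]

theorem isHermitian_adjMat {V : Type*} [Fintype V] {H : V → V → Prop} [DecidableRel H]
    (hsym : ∀ a b, H a b → H b a) : (adjMat H).IsHermitian := by
  ext i j
  simp only [Matrix.conjTranspose_apply, adjMat, star_trivial]
  exact if_congr ⟨hsym j i, hsym i j⟩ rfl rfl

theorem homCount_cycAdj_eq_trace_pow {V : Type*} [Fintype V] [DecidableEq V]
    {H : V → V → Prop} [DecidableRel H] (hsym : ∀ a b, H a b → H b a) (m : ℕ) :
    (HomCount (cycAdj (m + 1)) H : ℝ) = (adjMat H ^ (m + 1)).trace := by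
  rw [Matrix.trace_pow_succ_eq_sum_cyclic_prod, HomCount, Fintype.card_subtype, card_filter]
  push_cast
  refine Finset.sum_congr rfl fun g _ => ?_
  simp only [adjMat, Finset.prod_boole, mem_univ, true_implies, forall_cycAdj_imp_iff hsym]

theorem sum_pow_succ_pow_le_sum_pow_pow_succ {ι : Type*} (s : Finset ι) {a : ι → ℝ}
    (ha : ∀ i ∈ s, 0 ≤ a i) {m : ℕ} (hm : 0 < m) :
    (∑ i ∈ s, a i ^ (m + 1)) ^ m ≤ (∑ i ∈ s, a i ^ m) ^ (m + 1) := by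
  rcases s.eq_empty_or_nonempty with rfl | hs
  · simp [zero_pow hm.ne']
  obtain ⟨i₀, hi₀, hmax⟩ := s.exists_max_image a hs
  have hsum : 0 ≤ ∑ i ∈ s, a i ^ m := Finset.sum_nonneg fun i hi => pow_nonneg (ha i hi) m
  have hle_max : ∑ i ∈ s, a i ^ (m + 1) ≤ (∑ i ∈ s, a i ^ m) * a i₀ := by
    rw [Finset.sum_mul]
    exact Finset.sum_le_sum fun i hi =>
      (pow_succ (a i) m).trans_le (mul_le_mul_of_nonneg_left (hmax i hi) (pow_nonneg (ha i hi) m))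
  have hmax_le : a i₀ ^ m ≤ ∑ i ∈ s, a i ^ m :=
    Finset.single_le_sum (fun i hi => pow_nonneg (ha i hi) m) hi₀
  calc (∑ i ∈ s, a i ^ (m + 1)) ^ m
      ≤ ((∑ i ∈ s, a i ^ m) * a i₀) ^ m :=
        pow_le_pow_left₀ (Finset.sum_nonneg fun i hi => pow_nonneg (ha i hi) _) hle_max m
    _ = (∑ i ∈ s, a i ^ m) ^ m * a i₀ ^ m := mul_pow _ _ m
    _ ≤ (∑ i ∈ s, a i ^ m) ^ m * ∑ i ∈ s, a i ^ m := by gcongr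
    _ = (∑ i ∈ s, a i ^ m) ^ (m + 1) := (pow_succ _ m).symm

theorem sum_pow_succ_pow_le_sum_pow_pow_succ_of_even {ι : Type*} (s : Finset ι) (μ : ι → ℝ)
    {m : ℕ} (hm : Even m) (hm0 : 0 < m) :
    (∑ i ∈ s, μ i ^ (m + 1)) ^ m ≤ (∑ i ∈ s, μ i ^ m) ^ (m + 1) :=
  calc (∑ i ∈ s, μ i ^ (m + 1)) ^ m
      = |∑ i ∈ s, μ i ^ (m + 1)| ^ m := (hm.pow_abs _).symm
    _ ≤ (∑ i ∈ s, |μ i| ^ (m + 1)) ^ m := by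
        gcongr
        exact (Finset.abs_sum_le_sum_abs _ _).trans_eq (by simp only [abs_pow])
    _ ≤ (∑ i ∈ s, |μ i| ^ m) ^ (m + 1) :=
        sum_pow_succ_pow_le_sum_pow_pow_succ s (fun i _ => abs_nonneg (μ i)) hm0
    _ = (∑ i ∈ s, μ i ^ m) ^ (m + 1) := by simp only [hm.pow_abs]

theorem rpow_inv_le_rpow_inv_of_pow_le_pow {x y : ℝ} (hx : 0 ≤ x) (hy : 0 ≤ y) {p q : ℕ}
    (hp : 0 < p) (hq : 0 < q) (h : x ^ q ≤ y ^ p) : x ^ (p : ℝ)⁻¹ ≤ y ^ (q : ℝ)⁻¹ := by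
  have key : ∀ {z : ℝ} {a b : ℕ}, 0 ≤ z → 0 < a → 0 < b →
      z ^ (a : ℝ)⁻¹ = (z ^ b) ^ ((a * b : ℕ) : ℝ)⁻¹ := fun hz ha hb => by
    rw [← Real.rpow_natCast, ← Real.rpow_mul hz]
    congr 1
    field_simp
    push_cast
    ring
  rw [key hx hp hq, key hy hq hp, mul_comm q p]
  exact Real.rpow_le_rpow (pow_nonneg hx q) h (by positivity)

theorem cycle_hom_odd_step_general {V : Type*} [Fintype V] [DecidableEq V]
    (H : V → V → Prop) [DecidableRel H] (hsym : ∀ a b, H a b → H b a)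
    (k : ℕ) (hk : 5 ≤ k) (hko : Odd k) :
    (HomCount (cycAdj k) H : ℝ) ^ ((k : ℝ)⁻¹) ≤
      (HomCount (cycAdj (k - 1)) H : ℝ) ^ (((k : ℝ) - 1)⁻¹) := by
  obtain ⟨m, rfl⟩ : ∃ m, k = m + 1 + 1 := ⟨k - 2, by omega⟩
  have hA := isHermitian_adjMat hsym
  have hcount : ∀ n, (HomCount (cycAdj (n + 1)) H : ℝ) = ∑ i, hA.eigenvalues i ^ (n + 1) :=
    fun n => by rw [homCount_cycAdj_eq_trace_pow hsym, hA.trace_pow_eq_sum_eigenvalues_pow]; rfl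
  have heven : Even (m + 1) := by simpa [Nat.even_add_one, Nat.odd_add_one] using hko
  rw [Nat.add_sub_cancel, show ((m + 1 + 1 : ℕ) : ℝ) - 1 = (m + 1 : ℕ) by push_cast; ring]
  refine rpow_inv_le_rpow_inv_of_pow_le_pow (Nat.cast_nonneg _) (Nat.cast_nonneg _)
    (m + 1).succ_pos m.succ_pos ?_
  rw [hcount, hcount]
  exact sum_pow_succ_pow_le_sum_pow_pow_succ_of_even _ _ heven m.succ_pos

/-- for odd `k ≥ 5`, `hom(C_k,H)^{1/k} ≤ hom(C_{k-1},H)^{1/(k-1)}`. -/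
theorem cycle_hom_odd_step {V : Type*} [Fintype V] [DecidableEq V]
    (H : V → V → Prop) [DecidableRel H] (hsym : ∀ a b, H a b → H b a)
    (hiso : ∀ v, ∃ w, H v w)
    (k : ℕ) (hk : 5 ≤ k) (hko : Odd k) :
    (HomCount (cycAdj k) H : ℝ) ^ ((k : ℝ)⁻¹) ≤
      (HomCount (cycAdj (k - 1)) H : ℝ) ^ (((k : ℝ) - 1)⁻¹) :=
  cycle_hom_odd_step_general H hsym k hk hko
end

section
/- Let G be an n-vertex 2-regular graph and H any finite graph without isolated vertices. Then hom(G, H) ≤ max{hom(C_3, H)^{n/3}, hom(C_4, H)^{n/4}}. -/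
open Finset

/-! ### Auxiliary lemmas -/

section Aux

variable {V : Type*} [Fintype V] [DecidableEq V]

/-- Trace of a power of a Hermitian real matrix as a power sum of its eigenvalues. -/
lemma aux_trace_pow_eq (A : Matrix V V ℝ) (hA : A.IsHermitian) (k : ℕ) :
    (A ^ k).trace = ∑ i, hA.eigenvalues i ^ k := by
  set U : Matrix V V ℝ := (Matrix.IsHermitian.eigenvectorUnitary hA : Matrix V V ℝ) with hU
  have h1 : U * star U = 1 :=
    Matrix.mem_unitaryGroup_iff.mp (Matrix.IsHermitian.eigenvectorUnitary hA).2
  have h2 : star U * U = 1 :=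
    Matrix.mem_unitaryGroup_iff'.mp (Matrix.IsHermitian.eigenvectorUnitary hA).2
  have key : ∀ m : ℕ, A ^ m = U * (Matrix.diagonal hA.eigenvalues) ^ m * star U := by
    intro m
    induction m with
    | zero => simp [pow_zero, h1]
    | succ m ih =>
        have hsp : A = U * Matrix.diagonal hA.eigenvalues * star U := by
          have := hA.spectral_theorem
          simpa using this
        rw [pow_succ, ih, pow_succ]
        calc U * Matrix.diagonal hA.eigenvalues ^ m * star U * A
            = U * Matrix.diagonal hA.eigenvalues ^ m * star U *
              (U * Matrix.diagonal hA.eigenvalues * star U) := by rw [← hsp]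
          _ = U * Matrix.diagonal hA.eigenvalues ^ m * (star U * U) *
              Matrix.diagonal hA.eigenvalues * star U := by
                simp only [Matrix.mul_assoc]
          _ = U * (Matrix.diagonal hA.eigenvalues ^ m * Matrix.diagonal hA.eigenvalues) *
              star U := by
                rw [h2]; simp only [Matrix.mul_one, Matrix.mul_assoc]
  rw [key k, Matrix.trace_mul_comm, ← Matrix.mul_assoc, h2, Matrix.one_mul,
    Matrix.diagonal_pow, Matrix.trace_diagonal]
  simp [Pi.pow_apply]

omit [Fintype V] [DecidableEq V] in
lemma aux_fin_snoc_succ {k : ℕ} (g : Fin (k+1) → V) (i : Fin (k+1)) :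
    (Fin.snoc g (g 0) : Fin (k+2) → V) i.succ = g (i + 1) := by
  by_cases h : i.val + 1 < k + 1
  · have h1 : i.succ = Fin.castSucc ⟨i.val + 1, h⟩ := by ext; simp
    rw [h1, Fin.snoc_castSucc]
    congr 1
    ext
    simp only [Fin.add_def, Fin.val_one']
    rw [Nat.mod_eq_of_lt (show 1 < k + 1 by omega), Nat.mod_eq_of_lt h]
  · have hik : i.val = k := by omega
    have h1 : i.succ = Fin.last (k+1) := by
      ext
      simp only [Fin.val_succ, Fin.val_last, hik]
    rw [h1, Fin.snoc_last]
    congr 1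
    ext
    simp only [Fin.add_def, Fin.val_one', Fin.val_zero, hik]
    rcases Nat.eq_zero_or_pos k with hk | hk
    · subst hk; rfl
    · rw [Nat.mod_eq_of_lt (show 1 < k + 1 by omega), Nat.mod_self]

lemma aux_pow_apply_sum (A : Matrix V V ℝ) :
    ∀ (k : ℕ) (x y : V), (A ^ k) x y =
      ∑ f : Fin k → V, (∏ i : Fin k, A ((Fin.cons x f : Fin (k+1) → V) i.castSucc)
          ((Fin.cons x f : Fin (k+1) → V) i.succ)) *
        (if (Fin.cons x f : Fin (k+1) → V) (Fin.last k) = y then 1 else 0) := by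
  intro k
  induction k with
  | zero =>
      intro x y
      simp [Matrix.one_apply]
  | succ k ih =>
      intro x y
      rw [pow_succ', Matrix.mul_apply]
      have hre : ∀ g : (Fin (k+1) → V) → ℝ,
          ∑ f : Fin (k+1) → V, g f = ∑ z : V, ∑ f : Fin k → V, g (Fin.cons z f) := by
        intro g
        rw [← (Fin.consEquiv (fun _ : Fin (k+1) => V)).sum_comp g, Fintype.sum_prod_type]
        rfl
      rw [hre]
      refine Finset.sum_congr rfl fun z _ => ?_
      rw [ih z y, Finset.mul_sum]
      refine Finset.sum_congr rfl fun f _ => ?_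
      rw [← mul_assoc]
      rw [Fin.prod_univ_succ]
      have e0 : ∀ j : Fin (k+1),
          (Fin.cons x (Fin.cons z f) : Fin (k+2) → V) j.succ =
            (Fin.cons z f : Fin (k+1) → V) j :=
        fun j => by simp
      have e1 : (Fin.cons x (Fin.cons z f) : Fin (k+2) → V) ((0 : Fin (k+1)).castSucc) = x := rfl
      have e2 : (Fin.cons x (Fin.cons z f) : Fin (k+2) → V) ((0 : Fin (k+1)).succ) = z := rfl
      rw [e1, e2]
      congr 1

lemma aux_trace_pow_sum (A : Matrix V V ℝ) (k : ℕ) :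
    (A ^ (k+1)).trace = ∑ g : Fin (k+1) → V, ∏ i : Fin (k+1), A (g i) (g (i + 1)) := by
  classical
  set T : (Fin (k+2) → V) → ℝ := fun c =>
    (∏ i : Fin (k+1), A (c i.castSucc) (c i.succ)) * (if c (Fin.last (k+1)) = c 0 then 1 else 0)
    with hT
  have e1 : ∑ c : Fin (k+2) → V, T c = ∑ x : V, ∑ f : Fin (k+1) → V, T (Fin.cons x f) := by
    rw [← (Fin.consEquiv (fun _ : Fin (k+2) => V)).sum_comp T, Fintype.sum_prod_type]
    rfl
  have e2 : ∑ c : Fin (k+2) → V, T c = ∑ g : Fin (k+1) → V, ∑ z : V, T (Fin.snoc g z) := by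
    rw [← (Fin.snocEquiv (fun _ : Fin (k+2) => V)).sum_comp T, Fintype.sum_prod_type]
    exact Finset.sum_comm
  have lhs_eq : (A ^ (k+1)).trace = ∑ c : Fin (k+2) → V, T c := by
    rw [Matrix.trace]
    simp only [Matrix.diag_apply]
    rw [e1]
    refine Finset.sum_congr rfl fun x _ => ?_
    rw [aux_pow_apply_sum A (k+1) x x]
    refine Finset.sum_congr rfl fun f _ => ?_
    rw [hT]
    simp only [Fin.cons_zero]
  rw [lhs_eq, e2]
  refine Finset.sum_congr rfl fun g _ => ?_
  have step : ∀ z : V, T (Fin.snoc g z) =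
      if z = g 0 then ∏ i : Fin (k+1), A ((Fin.snoc g z : Fin (k+2) → V) i.castSucc)
        ((Fin.snoc g z : Fin (k+2) → V) i.succ) else 0 := by
    intro z
    rw [hT]
    simp only [Fin.snoc_last]
    have : (Fin.snoc g z : Fin (k+2) → V) 0 = g 0 := by
      rw [show (0 : Fin (k+2)) = (0 : Fin (k+1)).castSucc from rfl, Fin.snoc_castSucc]
    rw [this]
    by_cases hz : z = g 0 <;> simp [hz]
  simp only [step]
  rw [Finset.sum_ite_eq' Finset.univ (g 0)
    (fun z => ∏ i : Fin (k+1), A ((Fin.snoc g z : Fin (k+2) → V) i.castSucc)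
      ((Fin.snoc g z : Fin (k+2) → V) i.succ))]
  simp only [Finset.mem_univ, if_true]
  refine Finset.prod_congr rfl fun i _ => ?_
  rw [Fin.snoc_castSucc, aux_fin_snoc_succ]

lemma aux_homCount_eq_sum {U : Type*} [Fintype U] [DecidableEq U]
    (G : U → U → Prop) [DecidableRel G] (H : V → V → Prop) [DecidableRel H] :
    (HomCount G H : ℝ) = ∑ f : U → V, (if ∀ a b, G a b → H (f a) (f b) then (1:ℝ) else 0) := by
  rw [HomCount, Fintype.card_subtype, Finset.card_filter]
  push_cast
  rfl

lemma aux_fin_add_one_val {m : ℕ} (i : Fin (m+2)) : (i + 1).val = (i.val + 1) % (m+2) := by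
  rw [Fin.add_def, Fin.val_one', Nat.mod_eq_of_lt (show 1 < m + 2 by omega)]

lemma aux_homCount_cyc_eq_trace (H : V → V → Prop) [DecidableRel H]
    (hsym : ∀ a b, H a b → H b a) (m : ℕ) :
    (HomCount (cycAdj (m+2)) H : ℝ) = ((adjMat H) ^ (m+2)).trace := by
  rw [show m + 2 = (m+1)+1 from rfl, aux_trace_pow_sum, aux_homCount_eq_sum]
  refine Finset.sum_congr rfl fun f _ => ?_
  have hiff : (∀ a b, cycAdj (m+2) a b → H (f a) (f b)) ↔
      (∀ i : Fin (m+2), H (f i) (f (i + 1))) := by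
    constructor
    · intro h i
      exact h i (i+1) (Or.inl (aux_fin_add_one_val i).symm)
    · intro h a b hab
      rcases hab with hab | hab
      · have : b = a + 1 := by ext; rw [aux_fin_add_one_val, hab]
        rw [this]; exact h a
      · have : a = b + 1 := by ext; rw [aux_fin_add_one_val, hab]
        rw [this]; exact hsym _ _ (h b)
  have : ∀ i : Fin (m+2), adjMat H (f i) (f (i+1)) = if H (f i) (f (i+1)) then (1:ℝ) else 0 :=
    fun i => rfl
  simp only [this, Fintype.prod_boole]
  simp only [hiff]
  congr 1

lemma aux_spectral_bound (A : Matrix V V ℝ) (hA : A.IsHermitian)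
    {k : ℕ} (hk : 4 ≤ k) :
    (A ^ k).trace ≤ (((A ^ 4).trace) ^ ((1:ℝ)/4)) ^ k := by
  have htr : ∀ k : ℕ, (A ^ k).trace = ∑ i, hA.eigenvalues i ^ k := aux_trace_pow_eq A hA
  set lam := hA.eigenvalues with hlam
  have hc4 : (A ^ 4).trace = ∑ i, lam i ^ 4 := htr 4
  have hc4nn : 0 ≤ (A ^ 4).trace := by
    rw [hc4]; positivity
  set r : ℝ := ((A ^ 4).trace) ^ ((1:ℝ)/4) with hr
  have hrnn : 0 ≤ r := Real.rpow_nonneg hc4nn _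
  have hr4 : r ^ 4 = (A ^ 4).trace := by
    rw [hr, ← Real.rpow_natCast (((A ^ 4).trace) ^ ((1:ℝ)/4)) 4, ← Real.rpow_mul hc4nn]
    norm_num
  have habs : ∀ i, |lam i| ≤ r := by
    intro i
    have h1 : |lam i| ^ 4 ≤ r ^ 4 := by
      rw [hr4, hc4]
      have : |lam i| ^ 4 = lam i ^ 4 := by
        rw [← abs_pow]
        exact abs_of_nonneg (by positivity)
      rw [this]
      exact Finset.single_le_sum (f := fun i => lam i ^ 4) (fun j _ => by positivity)
        (Finset.mem_univ i)
    exact le_of_pow_le_pow_left₀ (by norm_num) hrnn h1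
  have key : ∀ i, lam i ^ k ≤ r ^ (k - 4) * lam i ^ 4 := by
    intro i
    have h1 : lam i ^ k ≤ |lam i| ^ k := (le_abs_self _).trans (le_of_eq (abs_pow _ _))
    have h2 : |lam i| ^ k = |lam i| ^ (k - 4) * |lam i| ^ 4 := by
      rw [← pow_add]; congr 1; omega
    have h3 : |lam i| ^ (k - 4) ≤ r ^ (k - 4) := pow_le_pow_left₀ (abs_nonneg _) (habs i) _
    have h4 : |lam i| ^ 4 = lam i ^ 4 := by
      rw [← abs_pow]; exact abs_of_nonneg (by positivity)
    calc lam i ^ k ≤ |lam i| ^ k := h1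
      _ = |lam i| ^ (k-4) * |lam i| ^ 4 := h2
      _ ≤ r ^ (k-4) * lam i ^ 4 := by
          rw [h4]
          exact mul_le_mul_of_nonneg_right h3 (by positivity)
  calc (A ^ k).trace = ∑ i, lam i ^ k := htr k
    _ ≤ ∑ i, r ^ (k - 4) * lam i ^ 4 := Finset.sum_le_sum fun i _ => key i
    _ = r ^ (k - 4) * ∑ i, lam i ^ 4 := by rw [Finset.mul_sum]
    _ = r ^ (k - 4) * r ^ 4 := by rw [← hc4, hr4]
    _ = r ^ k := by rw [← pow_add]; congr 1; omega

lemma aux_isHermitian (H : V → V → Prop) [DecidableRel H] (hsym : ∀ a b, H a b → H b a) :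
    (adjMat H).IsHermitian := by
  refine Matrix.IsHermitian.ext fun i j => ?_
  simp only [adjMat, RCLike.star_def, starRingEnd_apply, star_trivial]
  by_cases h : H i j
  · rw [if_pos h, if_pos (hsym _ _ h)]
  · rw [if_neg h, if_neg (fun h' => h (hsym _ _ h'))]

end Aux

section Graph

lemma two_elt {U : Type*} [DecidableEq U] {s : Finset U} (h2 : s.card = 2) {a b x : U}
    (ha : a ∈ s) (hb : b ∈ s) (hab : b ≠ a) (hx : x ∈ s) : x = a ∨ x = b := by
  by_cases hxa : x = a
  · exact Or.inl hxa
  · right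
    have h1 : (s.erase a).card = 1 := by rw [Finset.card_erase_of_mem ha, h2]
    exact Finset.card_le_one.mp (le_of_eq h1) x (Finset.mem_erase.mpr ⟨hxa, hx⟩)
      b (Finset.mem_erase.mpr ⟨hab, hb⟩)

lemma exists_cycle_struct {U : Type*} [Fintype U] [DecidableEq U] (G : SimpleGraph U) [DecidableRel G.Adj]
    (hreg : ∀ v, G.degree v = 2) (u : U) :
    ∃ (k : ℕ) (φ : Fin k → U), 3 ≤ k ∧ Function.Injective φ ∧
      (∀ i j, G.Adj (φ i) (φ j) ↔ cycAdj k i j) ∧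
      (∀ i x, G.Adj (φ i) x → ∃ j, x = φ j) := by
  classical
  have hcard : ∀ v, (G.neighborFinset v).card = 2 := fun v => hreg v
  -- pick a neighbor of u
  have hune : (G.neighborFinset u).Nonempty := by
    rw [← Finset.card_pos, hcard]; omega
  obtain ⟨a, ha⟩ := hune
  rw [SimpleGraph.mem_neighborFinset] at ha
  -- step function
  set nxt : U → U → U := fun pr c =>
    if h : ((G.neighborFinset c).erase pr).Nonempty then h.choose else c with hnxt
  have nxt_spec : ∀ pr c, G.Adj c pr → G.Adj c (nxt pr c) ∧ nxt pr c ≠ pr := by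
    intro pr c hadj
    have hmem : pr ∈ G.neighborFinset c := (SimpleGraph.mem_neighborFinset _ _ _).mpr hadj
    have hne : ((G.neighborFinset c).erase pr).Nonempty := by
      rw [← Finset.card_pos, Finset.card_erase_of_mem hmem, hcard]; omega
    have : nxt pr c = hne.choose := by rw [hnxt]; simp [dif_pos hne]
    have hch := hne.choose_spec
    rw [Finset.mem_erase, SimpleGraph.mem_neighborFinset] at hch
    rw [this]
    exact ⟨hch.2, hch.1⟩
  -- the walk
  set p : ℕ → U × U := fun n => Nat.rec (u, a) (fun _ q => (q.2, nxt q.1 q.2)) n with hp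
  set v : ℕ → U := fun n => (p n).1 with hv
  have hv0 : v 0 = u := rfl
  have hv1 : v 1 = a := rfl
  have vsucc : ∀ n, v (n + 2) = nxt (v n) (v (n+1)) := fun n => rfl
  have adj : ∀ n, G.Adj (v n) (v (n+1)) := by
    intro n
    induction n with
    | zero => exact ha
    | succ m ihm =>
        rw [vsucc]
        exact (nxt_spec _ _ ihm.symm).1
  have nb : ∀ n, v (n + 2) ≠ v n := by
    intro n
    rw [vsucc]
    exact (nxt_spec _ _ (adj n).symm).2
  -- neighbor characterization at positive indices
  have nbr_char : ∀ n x, G.Adj (v (n+1)) x → x = v n ∨ x = v (n + 2) := by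
    intro n x hx
    refine two_elt (hcard (v (n+1))) ?_ ?_ ?_ ?_
    · exact (SimpleGraph.mem_neighborFinset _ _ _).mpr (adj n).symm
    · exact (SimpleGraph.mem_neighborFinset _ _ _).mpr (by rw [vsucc]; exact (nxt_spec _ _ (adj n).symm).1)
    · exact nb n
    · exact (SimpleGraph.mem_neighborFinset _ _ _).mpr hx
  -- backward determinism
  have back : ∀ n m, p (n+1) = p (m+1) → p n = p m := by
    intro n m hnm
    have h2 : v (n+1) = v (m+1) := congrArg Prod.fst hnm
    have h3 : v (n+2) = v (m+2) := by
      have := congrArg Prod.snd hnm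
      exact this
    have hvn : v n = v m := by
      have hadj : G.Adj (v (m+1)) (v n) := by rw [← h2]; exact (adj n).symm
      rcases nbr_char m (v n) hadj with h | h
      · exact h
      · exfalso; rw [← h3] at h; exact (nb n) h.symm
    have : ∀ q r : ℕ, p q = (v q, v (q+1)) := by
      intro q r
      exact Prod.ext rfl rfl
    rw [this n 0, this m 0, hvn, h2]
  -- periodicity: some positive return of the pair sequence
  have hrep : ∃ d, 0 < d ∧ p d = p 0 := by
    obtain ⟨i, j, hij, hpij⟩ := Finite.exists_ne_map_eq_of_infinite p
    rcases Nat.lt_or_ge i j with h | h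
    · have key : ∀ i j, i ≤ j → p i = p j → p 0 = p (j - i) := by
        intro i
        induction i with
        | zero => intro j _ h; simpa using h
        | succ i ih =>
            intro j hij h
            obtain ⟨j', rfl⟩ : ∃ j', j = j' + 1 := ⟨j - 1, by omega⟩
            have := back i j' h
            have h0 := ih j' (by omega) this
            rw [h0]
            congr 1
            omega
      exact ⟨j - i, by omega, (key i j (le_of_lt h) hpij).symm⟩
    · have h' : j < i := by omega
      have key : ∀ j i, j ≤ i → p j = p i → p 0 = p (i - j) := by
        intro j
        induction j with
        | zero => intro i _ h; simpa using h
        | succ j ih =>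
            intro i hij h
            obtain ⟨i', rfl⟩ : ∃ i', i = i' + 1 := ⟨i - 1, by omega⟩
            have := back j i' h
            have h0 := ih i' (by omega) this
            rw [h0]
            congr 1
            omega
      exact ⟨i - j, by omega, (key j i (le_of_lt h') hpij.symm).symm⟩
  -- first repeat of the vertex sequence
  have hQ : ∃ j, ∃ i, i < j ∧ v i = v j := by
    obtain ⟨d, hd, hpd⟩ := hrep
    exact ⟨d, 0, hd, (congrArg Prod.fst hpd).symm⟩
  set k := Nat.find hQ with hkdef
  obtain ⟨i0, hi0k, hvi0⟩ := Nat.find_spec hQ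
  rw [← hkdef] at hi0k hvi0
  have hmin : ∀ j, j < k → ∀ i, i < j → v i ≠ v j := by
    intro j hj i hij
    have := Nat.find_min hQ hj
    push_neg at this
    exact this i hij
  have vinj : ∀ i j, i < k → j < k → v i = v j → i = j := by
    intro i j hik hjk hv'
    rcases Nat.lt_trichotomy i j with h | h | h
    · exact absurd hv' (hmin j hjk i h)
    · exact h
    · exact absurd hv'.symm (hmin i hik j h)
  -- the first repeat returns to the start
  have hi0 : i0 = 0 := by
    by_contra h0
    obtain ⟨i', rfl⟩ : ∃ i', i0 = i' + 1 := ⟨i0 - 1, by omega⟩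
    obtain ⟨k', hk'⟩ : ∃ k', k = k' + 1 := ⟨k - 1, by omega⟩
    -- v (k-1) is a neighbor of v i0
    have hadj : G.Adj (v (i' + 1)) (v k') := by
      rw [hvi0, hk']
      exact (adj k').symm
    rcases nbr_char i' (v k') hadj with h | h
    · -- v k' = v i' : earlier repeat
      have : i' < k' := by omega
      exact hmin k' (by omega) i' this h.symm
    · -- v k' = v (i' + 2)
      rcases Nat.lt_trichotomy (i' + 2) k' with h2 | h2 | h2
      · exact hmin k' (by omega) (i' + 2) h2 h.symm
      · -- k = i0 + 2 : contradicts nonbacktracking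
        have : v (i' + 1 + 2) = v (i' + 1) := by
          rw [show i' + 1 + 2 = i' + 2 + 1 from rfl, h2, ← hk', ← hvi0]
        exact nb (i' + 1) this
      · -- k' ≤ i' + 1, so k = i0 + 1
        have hk'' : k' = i' + 1 := by omega
        have : v (i' + 1) = v (i' + 2) := by
          rw [hvi0, hk', hk'']
        exact (G.ne_of_adj (adj (i' + 1))) this
  rw [hi0] at hvi0
  -- k ≥ 3
  have hk1 : k ≠ 1 := by
    intro h
    rw [h, hv0, hv1] at hvi0
    exact (G.ne_of_adj ha) hvi0
  have hk2 : k ≠ 2 := by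
    intro h
    rw [h] at hvi0
    exact nb 0 hvi0.symm
  have hk3 : 3 ≤ k := by omega
  have hk0 : 0 < k := by omega
  have hvk : v k = v 0 := hvi0.symm
  -- adjacency to successor mod k
  have adjv : ∀ n, n < k → G.Adj (v n) (v ((n+1) % k)) := by
    intro n hn
    rcases Nat.lt_or_ge (n+1) k with h | h
    · rw [Nat.mod_eq_of_lt h]; exact adj n
    · have : n + 1 = k := by omega
      rw [this, Nat.mod_self, ← hvk, ← this]
      exact adj n
  -- full neighbor characterization mod k
  have char : ∀ n, n < k → ∀ x, G.Adj (v n) x →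
      x = v ((n+1) % k) ∨ x = v ((n + (k-1)) % k) := by
    intro n hn x hx
    rcases Nat.eq_zero_or_pos n with h0 | h0
    · subst h0
      have hadjb : G.Adj (v 0) (v (k-1)) := by
        have := adj (k-1)
        rw [show k - 1 + 1 = k by omega, hvk] at this
        exact this.symm
      have hne : v (k-1) ≠ v ((0+1) % k) := by
        rw [Nat.mod_eq_of_lt (by omega)]
        intro hcon
        have := vinj (k-1) 1 (by omega) (by omega) hcon
        omega
      have := two_elt (hcard (v 0))
        ((SimpleGraph.mem_neighborFinset _ _ _).mpr (by
          rw [Nat.mod_eq_of_lt (show 0+1 < k by omega)]; exact adj 0))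
        ((SimpleGraph.mem_neighborFinset _ _ _).mpr hadjb)
        hne ((SimpleGraph.mem_neighborFinset _ _ _).mpr hx)
      rcases this with h | h
      · exact Or.inl h
      · right
        rw [h]
        congr 1
        rw [Nat.zero_add, Nat.mod_eq_of_lt (by omega)]
    · obtain ⟨n', rfl⟩ : ∃ n', n = n' + 1 := ⟨n - 1, by omega⟩
      rcases nbr_char n' x hx with h | h
      · right
        rw [h]
        congr 1
        rw [show n' + 1 + (k - 1) = n' + k by omega, Nat.add_mod_right,
          Nat.mod_eq_of_lt (by omega)]
      · left
        rcases Nat.lt_or_ge (n' + 2) k with h2 | h2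
        · rw [h]
          congr 1
          rw [Nat.mod_eq_of_lt (by omega)]
        · have h2 : n' + 1 + 1 = k := by omega
          rw [h2, Nat.mod_self, h, show n' + 2 = k by omega, hvk]
  -- build φ
  refine ⟨k, fun i => v i.val, hk3, ?_, ?_, ?_⟩
  · intro i j hij
    exact Fin.ext (vinj i.val j.val i.isLt j.isLt hij)
  · intro i j
    constructor
    · intro hadj
      rcases char i.val i.isLt _ hadj with h | h
      · left
        have := vinj j.val ((i.val+1) % k) j.isLt (Nat.mod_lt _ hk0) h
        omega
      · right
        have hj : j.val = (i.val + (k-1)) % k :=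
          vinj j.val ((i.val + (k-1)) % k) j.isLt (Nat.mod_lt _ hk0) h
        rcases Nat.eq_zero_or_pos i.val with h0 | h0
        · rw [h0, Nat.zero_add, Nat.mod_eq_of_lt (by omega)] at hj
          rw [hj, show k - 1 + 1 = k by omega, Nat.mod_self, h0]
        · rw [show i.val + (k-1) = (i.val - 1) + k by omega, Nat.add_mod_right,
            Nat.mod_eq_of_lt (by omega)] at hj
          rw [hj, show i.val - 1 + 1 = i.val by omega, Nat.mod_eq_of_lt i.isLt]
    · intro hc
      rcases hc with h | h
      · have := adjv i.val i.isLt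
        rw [h] at this
        exact this
      · have := adjv j.val j.isLt
        rw [h] at this
        exact this.symm
  · intro i x hx
    rcases char i.val i.isLt x hx with h | h
    · exact ⟨⟨(i.val + 1) % k, Nat.mod_lt _ hk0⟩, h⟩
    · exact ⟨⟨(i.val + (k-1)) % k, Nat.mod_lt _ hk0⟩, h⟩

variable {V : Type*} [Fintype V] [DecidableEq V]

lemma homCount_congr {U : Type*} [Fintype U] [DecidableEq U]
    (G G' : U → U → Prop) [DecidableRel G] [DecidableRel G']
    (H : V → V → Prop) [DecidableRel H] (h : ∀ a b, G a b ↔ G' a b) :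
    HomCount G H = HomCount G' H := by
  rw [HomCount, HomCount]
  apply Fintype.card_congr
  exact Equiv.subtypeEquivRight (fun f => by
    constructor
    · intro hf a b hab
      exact hf a b ((h a b).mpr hab)
    · intro hf a b hab
      exact hf a b ((h a b).mp hab))

lemma homCount_empty {U : Type*} [Fintype U] [DecidableEq U] [IsEmpty U]
    (G : U → U → Prop) [DecidableRel G] (H : V → V → Prop) [DecidableRel H] :
    HomCount G H = 1 := by
  rw [HomCount]
  haveI : Unique {f : U → V // ∀ a b, G a b → H (f a) (f b)} :=
    { default := ⟨fun x => isEmptyElim x, fun a => isEmptyElim a⟩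
      uniq := fun f => Subtype.ext (funext fun x => isEmptyElim x) }
  exact Fintype.card_unique

lemma homCount_split {U₁ U₂ U : Type*} [Fintype U₁] [DecidableEq U₁]
    [Fintype U₂] [DecidableEq U₂] [Fintype U] [DecidableEq U]
    (e : U₁ ⊕ U₂ ≃ U) (G : U → U → Prop) [DecidableRel G]
    (G₁ : U₁ → U₁ → Prop) [DecidableRel G₁] (G₂ : U₂ → U₂ → Prop) [DecidableRel G₂]
    (H : V → V → Prop) [DecidableRel H]
    (h11 : ∀ i j, G (e (Sum.inl i)) (e (Sum.inl j)) ↔ G₁ i j)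
    (h22 : ∀ i j, G (e (Sum.inr i)) (e (Sum.inr j)) ↔ G₂ i j)
    (h12 : ∀ i j, ¬ G (e (Sum.inl i)) (e (Sum.inr j)))
    (h21 : ∀ i j, ¬ G (e (Sum.inr i)) (e (Sum.inl j))) :
    HomCount G H = HomCount G₁ H * HomCount G₂ H := by
  rw [HomCount, HomCount, HomCount, ← Fintype.card_prod]
  apply Fintype.card_congr
  refine
    { toFun := fun f => (⟨fun i => f.1 (e (Sum.inl i)), ?_⟩, ⟨fun i => f.1 (e (Sum.inr i)), ?_⟩)
      invFun := fun gh => ⟨fun x => Sum.elim gh.1.1 gh.2.1 (e.symm x), ?_⟩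
      left_inv := ?_
      right_inv := ?_ }
  · intro a b hab
    exact f.2 _ _ ((h11 a b).mpr hab)
  · intro a b hab
    exact f.2 _ _ ((h22 a b).mpr hab)
  · intro a b hab
    rw [← e.apply_symm_apply a, ← e.apply_symm_apply b] at hab
    rcases hsa : e.symm a with i | i <;> rcases hsb : e.symm b with j | j <;>
      simp only [hsa, hsb, Sum.elim_inl, Sum.elim_inr] at hab ⊢
    · exact gh.1.2 _ _ ((h11 i j).mp hab)
    · exact absurd hab (h12 i j)
    · exact absurd hab (h21 i j)
    · exact gh.2.2 _ _ ((h22 i j).mp hab)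
  · intro f
    apply Subtype.ext
    funext x
    conv_rhs => rw [← e.apply_symm_apply x]
    rcases hsx : e.symm x with i | i <;> simp only [hsx, Sum.elim_inl, Sum.elim_inr]
  · intro gh
    apply Prod.ext <;> apply Subtype.ext <;> funext i <;> simp [Equiv.symm_apply_apply]

end Graph

section Main

variable {V : Type*} [Fintype V] [DecidableEq V]

lemma aux_main_ind (H : V → V → Prop) [DecidableRel H] (M : ℝ) (hM0 : 0 ≤ M)
    (hMcyc : ∀ k, 3 ≤ k → (HomCount (cycAdj k) H : ℝ) ≤ M ^ k) :
    ∀ (N : ℕ) (U : Type) [Fintype U] [DecidableEq U] (G : SimpleGraph U)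
      [DecidableRel G.Adj], Fintype.card U = N → (∀ v, G.degree v = 2) →
      (HomCount G.Adj H : ℝ) ≤ M ^ N := by
  intro N
  induction N using Nat.strong_induction_on with
  | _ N IH =>
    intro U _ _ G _ hcardU hreg
    rcases isEmpty_or_nonempty U with hU | hU
    · have hN : N = 0 := by rw [← hcardU]; exact Fintype.card_eq_zero
      rw [homCount_empty, hN]
      norm_num
    · obtain ⟨u⟩ := hU
      obtain ⟨k, φ, hk3, hinj, hiff, hclo⟩ := exists_cycle_struct G hreg u
      classical
      let W := {x : U // x ∉ Set.range φ}
      let e : (Fin k ⊕ W) ≃ U :=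
        (Equiv.sumCongr (Equiv.ofInjective φ hinj) (Equiv.refl W)).trans
          (Equiv.sumCompl (· ∈ Set.range φ))
      have he1 : ∀ i : Fin k, e (Sum.inl i) = φ i := fun i => rfl
      have he2 : ∀ x : W, e (Sum.inr x) = x.1 := fun x => rfl
      let G' : SimpleGraph W := G.comap (Subtype.val)
      haveI : DecidableRel G'.Adj := fun a b => by
        simp only [G', SimpleGraph.comap_adj]; infer_instance
      -- the complement is 2-regular
      have hreg' : ∀ x : W, G'.degree x = 2 := by
        intro x
        rw [← hreg x.1]
        unfold SimpleGraph.degree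
        apply Finset.card_bij (fun (y : W) _ => y.1)
        · intro y hy
          rw [SimpleGraph.mem_neighborFinset] at hy ⊢
          exact hy
        · intro y _ y' _ h
          exact Subtype.ext h
        · intro z hz
          rw [SimpleGraph.mem_neighborFinset] at hz
          have hznr : z ∉ Set.range φ := by
            rintro ⟨j, rfl⟩
            obtain ⟨j', hj'⟩ := hclo j x.1 hz.symm
            exact x.2 ⟨j', hj'.symm⟩
          refine ⟨⟨z, hznr⟩, ?_, rfl⟩
          rw [SimpleGraph.mem_neighborFinset]
          exact hz
      -- cardinalities
      have hkN : k ≤ N := by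
        have := Fintype.card_le_of_injective φ hinj
        rwa [Fintype.card_fin, hcardU] at this
      have hcompl : Fintype.card W = N - k := by
        have h1 : Fintype.card (Set.range φ) = k := by
          rw [Set.card_range_of_injective hinj, Fintype.card_fin]
        have h2 : Fintype.card W = Fintype.card U - Fintype.card (Set.range φ) :=
          Fintype.card_subtype_compl _
        rw [h2, h1, hcardU]
      -- split the homomorphism count
      have hsplit : HomCount G.Adj H = HomCount (cycAdj k) H * HomCount G'.Adj H := by
        apply homCount_split e G.Adj (cycAdj k) G'.Adj H
        · intro i j
          rw [he1, he1]
          exact hiff i j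
        · intro i j
          rw [he2, he2]
          exact Iff.rfl
        · intro i j h
          rw [he1, he2] at h
          obtain ⟨j', hj'⟩ := hclo i j.1 h
          exact j.2 ⟨j', hj'.symm⟩
        · intro i j h
          rw [he1, he2] at h
          obtain ⟨j', hj'⟩ := hclo j i.1 h.symm
          exact i.2 ⟨j', hj'.symm⟩
      have hIH : (HomCount G'.Adj H : ℝ) ≤ M ^ (N - k) :=
        IH (N - k) (by omega) W G' hcompl hreg'
      calc (HomCount G.Adj H : ℝ)
          = (HomCount (cycAdj k) H : ℝ) * (HomCount G'.Adj H : ℝ) := by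
            rw [hsplit]; push_cast; ring
        _ ≤ M ^ k * M ^ (N - k) := by
            apply mul_le_mul (hMcyc k hk3) hIH (Nat.cast_nonneg _) (pow_nonneg hM0 _)
        _ = M ^ N := by rw [← pow_add]; congr 1; omega

end Main

/-- if `G` is an `n`-vertex `2`-regular graph then
`hom(G,H) ≤ max{hom(C_3,H)^{n/3}, hom(C_4,H)^{n/4}}`. -/
theorem two_regular_hom_bound {n : ℕ} (hn : 3 ≤ n)
    (G : SimpleGraph (Fin n)) [DecidableRel G.Adj] (hreg : ∀ v, G.degree v = 2)
    {V : Type*} [Fintype V] [DecidableEq V]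
    (H : V → V → Prop) [DecidableRel H] (hsym : ∀ a b, H a b → H b a)
    (hiso : ∀ v, ∃ w, H v w) :
    (HomCount G.Adj H : ℝ) ≤
      max ((HomCount (cycAdj 3) H : ℝ) ^ ((n : ℝ) / 3))
        ((HomCount (cycAdj 4) H : ℝ) ^ ((n : ℝ) / 4)) := by
  have hc3nn : (0:ℝ) ≤ (HomCount (cycAdj 3) H : ℝ) := Nat.cast_nonneg _
  have hc4nn : (0:ℝ) ≤ (HomCount (cycAdj 4) H : ℝ) := Nat.cast_nonneg _
  set c3 : ℝ := (HomCount (cycAdj 3) H : ℝ) with hc3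
  set c4 : ℝ := (HomCount (cycAdj 4) H : ℝ) with hc4
  set M : ℝ := max (c3 ^ ((1:ℝ)/3)) (c4 ^ ((1:ℝ)/4)) with hM
  have hM0 : 0 ≤ M := le_trans (Real.rpow_nonneg hc3nn _) (le_max_left _ _)
  have hA := aux_isHermitian H hsym
  have hc3r : (c3 ^ ((1:ℝ)/3)) ^ (3:ℕ) = c3 := by
    rw [← Real.rpow_natCast (c3 ^ ((1:ℝ)/3)) 3, ← Real.rpow_mul hc3nn]
    norm_num
  have hc4r : (c4 ^ ((1:ℝ)/4)) ^ (4:ℕ) = c4 := by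
    rw [← Real.rpow_natCast (c4 ^ ((1:ℝ)/4)) 4, ← Real.rpow_mul hc4nn]
    norm_num
  have hMcyc : ∀ k, 3 ≤ k → (HomCount (cycAdj k) H : ℝ) ≤ M ^ k := by
    intro k hk
    rcases Nat.lt_or_ge k 4 with hk4 | hk4
    · have hk3 : k = 3 := by omega
      subst hk3
      calc (HomCount (cycAdj 3) H : ℝ) = (c3 ^ ((1:ℝ)/3)) ^ (3:ℕ) := by rw [hc3r, hc3]
        _ ≤ M ^ (3:ℕ) := pow_le_pow_left₀ (Real.rpow_nonneg hc3nn _) (le_max_left _ _) _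
    · obtain ⟨m, rfl⟩ : ∃ m, k = m + 2 := ⟨k - 2, by omega⟩
      have h4 : ((adjMat H) ^ 4).trace = c4 := by
        rw [hc4, aux_homCount_cyc_eq_trace H hsym 2]
      calc (HomCount (cycAdj (m+2)) H : ℝ)
          = ((adjMat H) ^ (m+2)).trace := aux_homCount_cyc_eq_trace H hsym m
        _ ≤ ((((adjMat H) ^ 4).trace) ^ ((1:ℝ)/4)) ^ (m+2) := aux_spectral_bound _ hA hk4
        _ = (c4 ^ ((1:ℝ)/4)) ^ (m+2) := by rw [h4]
        _ ≤ M ^ (m+2) := pow_le_pow_left₀ (Real.rpow_nonneg hc4nn _) (le_max_right _ _) _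
  have hmain : (HomCount G.Adj H : ℝ) ≤ M ^ n :=
    aux_main_ind H M hM0 hMcyc n (Fin n) G (by rw [Fintype.card_fin]) hreg
  refine hmain.trans (le_of_eq ?_)
  have h3 : (c3 ^ ((1:ℝ)/3)) ^ (n:ℕ) = c3 ^ ((n:ℝ)/3) := by
    rw [← Real.rpow_natCast (c3 ^ ((1:ℝ)/3)) n, ← Real.rpow_mul hc3nn]
    congr 1
    ring
  have h4 : (c4 ^ ((1:ℝ)/4)) ^ (n:ℕ) = c4 ^ ((n:ℝ)/4) := by
    rw [← Real.rpow_natCast (c4 ^ ((1:ℝ)/4)) n, ← Real.rpow_mul hc4nn]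
    congr 1
    ring
  rw [← h3, ← h4, hM]
  rcases le_total (c3 ^ ((1:ℝ)/3)) (c4 ^ ((1:ℝ)/4)) with h | h
  · rw [max_eq_right h, max_eq_right (pow_le_pow_left₀ (Real.rpow_nonneg hc3nn _) h n)]
  · rw [max_eq_left h, max_eq_left (pow_le_pow_left₀ (Real.rpow_nonneg hc4nn _) h n)]
end

section
/- Let M be a maximum matching in a finite simple graph G with unmatched vertex set I. If {x_1, x_2} is an edge of M and x_1 has at least two neighbors in I, then x_2 has no neighbor in I. -/
open Finset

/-- `M` is a matching in the simple graph `G`: a set of edges of `G` that are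
pairwise vertex-disjoint. -/
def IsMatchingIn {U : Type*} (G : SimpleGraph U) (M : Finset (Sym2 U)) : Prop :=
  (∀ e ∈ M, e ∈ G.edgeSet) ∧
    ∀ e ∈ M, ∀ f ∈ M, e ≠ f → ∀ v : U, v ∈ e → v ∉ f

/-- `v` is unmatched by the matching `M` (not covered by any edge of `M`). -/
def UnmatchedBy {U : Type*} (M : Finset (Sym2 U)) (v : U) : Prop :=
  ∀ e ∈ M, v ∉ e

/-- if `{x₁,x₂}` is an edge of a maximum matching `M` and `x₁` has
at least two neighbors among the unmatched vertices, then `x₂` has none. -/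
theorem matching_edge_degree_dichotomy {U : Type*} [Fintype U] [DecidableEq U]
    (G : SimpleGraph U) (M : Finset (Sym2 U))
    (hM : IsMatchingIn G M)
    (hmax : ∀ M' : Finset (Sym2 U), IsMatchingIn G M' → M'.card ≤ M.card)
    (x₁ x₂ : U) (he : s(x₁, x₂) ∈ M)
    (y₁ y₂ : U) (hy : y₁ ≠ y₂)
    (hy₁ : UnmatchedBy M y₁) (hy₂ : UnmatchedBy M y₂)
    (ha₁ : G.Adj x₁ y₁) (ha₂ : G.Adj x₁ y₂) :
    ∀ y : U, UnmatchedBy M y → ¬ G.Adj x₂ y := by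
  intro y hyu hadj
  obtain ⟨y', hy'u, hadj', hyy'⟩ : ∃ y', UnmatchedBy M y' ∧ G.Adj x₁ y' ∧ y ≠ y' := by
    by_cases h : y = y₁
    · exact ⟨y₂, hy₂, ha₂, h ▸ hy⟩
    · exact ⟨y₁, hy₁, ha₁, h⟩
  have hx12 : G.Adj x₁ x₂ := (SimpleGraph.mem_edgeSet G).mp (hM.1 _ he)
  have hyx1 : y ≠ x₁ := fun h => hyu _ he (by simp [h])
  have hyx2 : y ≠ x₂ := fun h => hyu _ he (by simp [h])
  have hy'x1 : y' ≠ x₁ := fun h => hy'u _ he (by simp [h])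
  have hy'x2 : y' ≠ x₂ := fun h => hy'u _ he (by simp [h])
  set M' : Finset (Sym2 U) :=
    insert (s(x₂, y)) (insert (s(x₁, y')) (M.erase s(x₁, x₂))) with hM'def
  have hA : ∀ f ∈ M.erase s(x₁, x₂), x₁ ∉ f ∧ x₂ ∉ f := by
    intro f hf
    have hfm := Finset.mem_of_mem_erase hf
    have hne := (Finset.mem_erase.mp hf).1
    exact ⟨hM.2 _ he f hfm (Ne.symm hne) x₁ (by simp),
           hM.2 _ he f hfm (Ne.symm hne) x₂ (by simp)⟩
  have h1 : s(x₁, y') ∉ M.erase s(x₁, x₂) := fun h =>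
    hy'u _ (Finset.mem_of_mem_erase h) (by simp)
  have h2 : s(x₂, y) ∉ insert (s(x₁, y')) (M.erase s(x₁, x₂)) := by
    intro h
    rcases Finset.mem_insert.mp h with h | h
    · rw [Sym2.eq_iff] at h
      tauto
    · exact hyu _ (Finset.mem_of_mem_erase h) (by simp)
  have hcard : M'.card = M.card + 1 := by
    rw [hM'def, Finset.card_insert_of_notMem h2, Finset.card_insert_of_notMem h1,
      Finset.card_erase_of_mem he]
    have : 1 ≤ M.card := Finset.card_pos.mpr ⟨_, he⟩
    omega
  have hmatch : IsMatchingIn G M' := by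
    constructor
    · intro e heM
      rcases Finset.mem_insert.mp heM with h | h
      · exact h ▸ (SimpleGraph.mem_edgeSet G).mpr hadj
      rcases Finset.mem_insert.mp h with h | h
      · exact h ▸ (SimpleGraph.mem_edgeSet G).mpr hadj'
      · exact hM.1 _ (Finset.mem_of_mem_erase h)
    · intro e heM f hfM hef v hv
      rw [hM'def] at heM hfM
      have hx12ne : x₁ ≠ x₂ := hx12.ne
      have heM' : e = s(x₂, y) ∨ e = s(x₁, y') ∨ e ∈ M.erase s(x₁, x₂) := by
        rcases Finset.mem_insert.mp heM with h | h
        · exact Or.inl h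
        · exact Or.inr (Finset.mem_insert.mp h)
      have hfM' : f = s(x₂, y) ∨ f = s(x₁, y') ∨ f ∈ M.erase s(x₁, x₂) := by
        rcases Finset.mem_insert.mp hfM with h | h
        · exact Or.inl h
        · exact Or.inr (Finset.mem_insert.mp h)
      rcases heM' with he1 | he1 | he1 <;> rcases hfM' with hf1 | hf1 | hf1
      · exact absurd (he1.trans hf1.symm) hef
      · -- e = s(x₂,y), f = s(x₁,y')
        subst he1 hf1
        intro hvf
        rcases Sym2.mem_iff.mp hv with rfl | rfl <;>
          rcases Sym2.mem_iff.mp hvf with h | h <;> simp_all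
      · -- e = s(x₂,y), f ∈ erase
        subst he1
        rcases Sym2.mem_iff.mp hv with rfl | rfl
        · exact (hA f hf1).2
        · exact hyu _ (Finset.mem_of_mem_erase hf1)
      · -- e = s(x₁,y'), f = s(x₂,y)
        subst he1 hf1
        intro hvf
        rcases Sym2.mem_iff.mp hv with rfl | rfl <;>
          rcases Sym2.mem_iff.mp hvf with h | h <;> simp_all
      · exact absurd (he1.trans hf1.symm) hef
      · subst he1
        rcases Sym2.mem_iff.mp hv with rfl | rfl
        · exact (hA f hf1).1
        · exact hy'u _ (Finset.mem_of_mem_erase hf1)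
      · -- e ∈ erase, f = s(x₂,y)
        subst hf1
        intro hvf
        rcases Sym2.mem_iff.mp hvf with rfl | rfl
        · exact (hA e he1).2 hv
        · exact hyu _ (Finset.mem_of_mem_erase he1) hv
      · subst hf1
        intro hvf
        rcases Sym2.mem_iff.mp hvf with rfl | rfl
        · exact (hA e he1).1 hv
        · exact hy'u _ (Finset.mem_of_mem_erase he1) hv
      · exact hM.2 _ (Finset.mem_of_mem_erase he1) _ (Finset.mem_of_mem_erase hf1) hef v hv
  have := hmax M' hmatch
  omega
end

section
/- Let M be a maximum matching in a finite simple graph G with unmatched vertex set I. Then the number of vertices of I that are adjacent to both endpoints of some edge of M is at most |M|. -/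
open Finset

/-!
If two distinct unmatched vertices `y`, `y'` were both adjacent to both ends of an edge `ab` of
the maximum matching `M`, then `y a b y'` would be an augmenting path: replacing `ab` by `ya` and
`y'b` gives a larger matching. So every edge of `M` is "shared" by at most one unmatched vertex,
and the unmatched vertices in question inject into `M`.
-/

theorem Set.ncard_le_card_of_forall_subsingleton {α β : Type*} {s : Set α} (t : Finset β)
    (r : α → β → Prop) (hs : ∀ a ∈ s, ∃ b ∈ t, r a b)
    (ht : ∀ b ∈ t, {a ∈ s | r a b}.Subsingleton) : s.ncard ≤ t.card := by
  obtain rfl | ⟨a₀, ha₀⟩ := s.eq_empty_or_nonempty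
  · simp
  have : Nonempty β := ⟨(hs a₀ ha₀).choose⟩
  choose! f hft hr using hs
  calc s.ncard ≤ (t : Set β).ncard :=
        Set.ncard_le_ncard_of_injOn f hft
          (fun a ha a' ha' h => ht _ (hft a ha) ⟨ha, hr a ha⟩ ⟨ha', h ▸ hr a' ha'⟩)
    _ = t.card := Set.ncard_coe_finset t

section Matching

variable {U : Type*} {G : SimpleGraph U} {M N : Finset (Sym2 U)} {e f : Sym2 U} {v : U}

theorem UnmatchedBy.mono (hv : UnmatchedBy M v) (hNM : N ⊆ M) : UnmatchedBy N v :=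
  fun e he => hv e (hNM he)

theorem unmatchedBy_insert [DecidableEq (Sym2 U)] :
    UnmatchedBy (insert f M) v ↔ v ∉ f ∧ UnmatchedBy M v := by
  simp [UnmatchedBy]

theorem notMem_of_forall_unmatchedBy (hf : ∀ v ∈ f, UnmatchedBy M v) : f ∉ M :=
  fun hfM => hf _ f.out_fst_mem f hfM f.out_fst_mem

namespace IsMatchingIn

theorem mono (hM : IsMatchingIn G M) (hNM : N ⊆ M) : IsMatchingIn G N :=
  ⟨fun e he => hM.1 e (hNM he), fun e he f hf => hM.2 e (hNM he) f (hNM hf)⟩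

theorem unmatchedBy_erase [DecidableEq (Sym2 U)] (hM : IsMatchingIn G M) (he : e ∈ M)
    (hv : v ∈ e) : UnmatchedBy (M.erase e) v := fun f hf =>
  hM.2 e he f (mem_of_mem_erase hf) (ne_of_mem_erase hf).symm v hv

theorem insert_of_unmatchedBy [DecidableEq (Sym2 U)] (hM : IsMatchingIn G M)
    (hf : f ∈ G.edgeSet) (hfM : ∀ v ∈ f, UnmatchedBy M v) : IsMatchingIn G (insert f M) := by
  refine ⟨?_, ?_⟩
  · simpa [forall_mem_insert] using ⟨hf, hM.1⟩
  · simp only [mem_insert]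
    rintro e (rfl | he) g (rfl | hg) hne v hve
    · exact absurd rfl hne
    · exact hfM v hve g hg
    · exact fun hvg => hfM v hvg e he hve
    · exact hM.2 e he g hg hne v hve

theorem exists_card_eq_succ_of_augmentingPath (hM : IsMatchingIn G M) {a b y y' : U}
    (hab : s(a, b) ∈ M) (hy : UnmatchedBy M y) (hy' : UnmatchedBy M y') (hne : y ≠ y')
    (hya : G.Adj y a) (hy'b : G.Adj y' b) :
    ∃ M' : Finset (Sym2 U), IsMatchingIn G M' ∧ M'.card = M.card + 1 := by
  classical
  have hya_ne : y ≠ a := fun h => hy _ hab (by simp [h])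
  have hyb_ne : y ≠ b := fun h => hy _ hab (by simp [h])
  have hy'a_ne : y' ≠ a := fun h => hy' _ hab (by simp [h])
  have hab_ne : a ≠ b := (hM.1 _ hab : G.Adj a b).ne
  set N := M.erase s(a, b)
  have hN : IsMatchingIn G N := hM.mono (erase_subset _ _)
  have hN₁ : ∀ v ∈ s(y', b), UnmatchedBy N v := by
    simp only [Sym2.mem_iff, forall_eq_or_imp, forall_eq]
    exact ⟨hy'.mono (erase_subset _ _), hM.unmatchedBy_erase hab (by simp)⟩
  have hN₂ : ∀ v ∈ s(y, a), UnmatchedBy (insert s(y', b) N) v := by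
    simp only [Sym2.mem_iff, forall_eq_or_imp, forall_eq, unmatchedBy_insert]
    exact ⟨⟨by simp [hne, hyb_ne], hy.mono (erase_subset _ _)⟩,
      ⟨by simp [hy'a_ne.symm, hab_ne], hM.unmatchedBy_erase hab (by simp)⟩⟩
  refine ⟨insert s(y, a) (insert s(y', b) N),
    (hN.insert_of_unmatchedBy hy'b hN₁).insert_of_unmatchedBy hya hN₂, ?_⟩
  rw [card_insert_of_notMem (notMem_of_forall_unmatchedBy hN₂),
    card_insert_of_notMem (notMem_of_forall_unmatchedBy hN₁), card_erase_add_one hab]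

theorem subsingleton_unmatched_adj_both (hM : IsMatchingIn G M)
    (hmax : ∀ M' : Finset (Sym2 U), IsMatchingIn G M' → M'.card ≤ M.card) (he : e ∈ M) :
    {y | UnmatchedBy M y ∧ ∀ v ∈ e, G.Adj y v}.Subsingleton := by
  induction e using Sym2.ind with | h a b => ?_
  rintro y ⟨hy, hya⟩ y' ⟨hy', hy'b⟩
  by_contra hne
  obtain ⟨M', hM', hcard⟩ := hM.exists_card_eq_succ_of_augmentingPath he hy hy' hne
    (hya a (by simp)) (hy'b b (by simp))
  have := hmax M' hM'
  omega

end IsMatchingIn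

end Matching

theorem unmatched_adjacent_both_endpoints_bound_general {U : Type*}
    (G : SimpleGraph U) (M : Finset (Sym2 U))
    (hM : IsMatchingIn G M)
    (hmax : ∀ M' : Finset (Sym2 U), IsMatchingIn G M' → M'.card ≤ M.card) :
    {y : U | UnmatchedBy M y ∧ ∃ e ∈ M, ∀ v ∈ e, G.Adj y v}.ncard ≤ M.card := by
  refine Set.ncard_le_card_of_forall_subsingleton M (fun y e => ∀ v ∈ e, G.Adj y v)
    (fun y hy => hy.2) fun e he => ?_
  exact (hM.subsingleton_unmatched_adj_both hmax he).anti fun y hy => ⟨hy.1.1, hy.2⟩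

/-- at most `|M|` unmatched vertices are adjacent to both
endpoints of some edge of the maximum matching `M`. -/
theorem unmatched_adjacent_both_endpoints_bound {U : Type*} [Fintype U] [DecidableEq U]
    (G : SimpleGraph U) (M : Finset (Sym2 U))
    (hM : IsMatchingIn G M)
    (hmax : ∀ M' : Finset (Sym2 U), IsMatchingIn G M' → M'.card ≤ M.card) :
    {y : U | UnmatchedBy M y ∧ ∃ e ∈ M, ∀ v ∈ e, G.Adj y v}.ncard ≤ M.card :=
  unmatched_adjacent_both_endpoints_bound_general G M hM hmax
end

section
/- Let H be a finite graph with maximum degree Δ (loops counted once) and let u, v be vertices of H. The number of homomorphisms from the path P_4 on 4 vertices to H sending the first vertex to u and the last vertex to v is at most Δ^2. Moreover, if no connected component of H is K_Δ^loop or K_{Δ,Δ}, then this number is strictly less than Δ^2. -/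
open Finset

def p4Equiv {V : Type*} (H : V → V → Prop) (hsym : ∀ a b, H a b → H b a) (u v : V) :
    {f : Fin 4 → V // (∀ a b, pathAdj 4 a b → H (f a) (f b)) ∧ f 0 = u ∧ f 3 = v} ≃
    {p : V × V // H u p.1 ∧ H p.1 p.2 ∧ H p.2 v} where
  toFun f := ⟨(f.1 1, f.1 2), by
    obtain ⟨hf, h0, h3⟩ := f.2
    refine ⟨?_, hf 1 2 (Or.inl rfl), ?_⟩
    · have := hf 0 1 (Or.inl rfl); rwa [h0] at this
    · have := hf 2 3 (Or.inl rfl); rwa [h3] at this⟩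
  invFun p := ⟨![u, p.1.1, p.1.2, v], by
    obtain ⟨h1, h2, h3⟩ := p.2
    refine ⟨?_, rfl, rfl⟩
    intro a b hab
    fin_cases a <;> fin_cases b <;> simp_all [pathAdj]⟩
  left_inv f := by
    obtain ⟨f, hf, h0, h3⟩ := f
    ext i
    fin_cases i <;> simp [h0, h3]
  right_inv p := rfl

lemma aux_count {V : Type*} [Fintype V] [DecidableEq V] (N : V → Finset V) (Δ : ℕ)
    (hΔpos : 0 < Δ) (hdeg : ∀ x, (N x).card ≤ Δ) (x y : V)
    (hsum : ∑ a ∈ N x, (N a ∩ N y).card = Δ ^ 2) :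
    (N x).card = Δ ∧ ∀ a ∈ N x, N a = N y := by
  have hterm : ∀ a ∈ N x, (N a ∩ N y).card ≤ Δ := fun a _ =>
    le_trans (Finset.card_le_card Finset.inter_subset_left) (hdeg a)
  have hcard : (N x).card = Δ := by
    have h1 : Δ ^ 2 ≤ (N x).card * Δ := by
      rw [← hsum]
      calc ∑ a ∈ N x, (N a ∩ N y).card ≤ ∑ a ∈ N x, Δ := Finset.sum_le_sum hterm
        _ = (N x).card * Δ := by rw [Finset.sum_const, smul_eq_mul]
    have h2 : (N x).card * Δ ≤ Δ * Δ := Nat.mul_le_mul_right Δ (hdeg x)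
    rw [sq] at h1
    exact Nat.eq_of_mul_eq_mul_right hΔpos (le_antisymm h2 h1)
  have hterm' : ∀ a ∈ N x, (N a ∩ N y).card = Δ := by
    by_contra h
    push_neg at h
    obtain ⟨a₀, ha₀, hne⟩ := h
    have : ∑ a ∈ N x, (N a ∩ N y).card < ∑ a ∈ N x, Δ :=
      Finset.sum_lt_sum hterm ⟨a₀, ha₀, lt_of_le_of_ne (hterm a₀ ha₀) hne⟩
    rw [hsum, Finset.sum_const, smul_eq_mul, hcard, ← sq] at this
    exact lt_irrefl _ this
  refine ⟨hcard, fun a ha => ?_⟩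
  have h1 := hterm' a ha
  have h2 : N a ∩ N y = N a :=
    Finset.eq_of_subset_of_card_le Finset.inter_subset_left (by rw [h1]; exact hdeg a)
  have h3 : N a ⊆ N y := h2 ▸ Finset.inter_subset_right
  exact Finset.eq_of_subset_of_card_le h3 (by rw [← h2, h1]; exact hdeg y)

lemma sum_count {V : Type*} [Fintype V] [DecidableEq V]
    (H : V → V → Prop) [DecidableRel H] (hsym : ∀ a b, H a b → H b a) (u v : V) :
    (univ.filter fun p : V × V => H u p.1 ∧ H p.1 p.2 ∧ H p.2 v).card
      = ∑ a ∈ univ.filter (H u), ((univ.filter (H a)) ∩ (univ.filter (H v))).card := by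
  simp only [← Finset.filter_and, Finset.card_filter, Finset.sum_filter,
    Fintype.sum_prod_type]
  refine Finset.sum_congr rfl fun a _ => ?_
  by_cases h : H u a
  · simp only [h, if_true, true_and]
    refine Finset.sum_congr rfl fun b _ => ?_
    have hvb : H v b ↔ H b v := ⟨hsym v b, hsym b v⟩
    simp [hvb]
  · simp [h]

lemma sum_count' {V : Type*} [Fintype V] [DecidableEq V]
    (H : V → V → Prop) [DecidableRel H] (hsym : ∀ a b, H a b → H b a) (u v : V) :
    (univ.filter fun p : V × V => H u p.1 ∧ H p.1 p.2 ∧ H p.2 v).card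
      = ∑ b ∈ univ.filter (H v), ((univ.filter (H b)) ∩ (univ.filter (H u))).card := by
  simp only [← Finset.filter_and, Finset.card_filter, Finset.sum_filter,
    Fintype.sum_prod_type_right]
  refine Finset.sum_congr rfl fun b _ => ?_
  by_cases h : H b v
  · have hvb : H v b := hsym b v h
    simp only [h, hvb, if_true, and_true]
    refine Finset.sum_congr rfl fun a _ => ?_
    have h1 : H b a ↔ H a b := ⟨hsym b a, hsym a b⟩
    by_cases ha : H u a <;> by_cases hab : H a b <;> simp [ha, hab, h1, and_comm]
  · have hvb : ¬ H v b := fun hh => h (hsym v b hh)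
    simp [h, hvb]

/-- for vertices `u, v` of `H` with maximum degree `Δ`, the number
of homomorphisms of `P₄` sending the first vertex to `u` and the last to `v` is
at most `Δ²`; and strictly less than `Δ²` if no connected component of `H` is
`K_Δ^loop` or `K_{Δ,Δ}`. -/
theorem path_four_endpoint_hom_bound {V : Type*} [Fintype V] [DecidableEq V]
    (H : V → V → Prop) [DecidableRel H] (hsym : ∀ a b, H a b → H b a)
    (Δ : ℕ) (hΔ : Δ = Finset.univ.sup (hdeg H)) (u v : V) :
    Fintype.card {f : Fin 4 → V //
        (∀ a b, pathAdj 4 a b → H (f a) (f b)) ∧ f 0 = u ∧ f 3 = v} ≤ Δ ^ 2 ∧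
    ((¬ ∃ S : Finset V, S.card = Δ ∧ ∀ a ∈ S, ∀ b : V, (H a b ↔ b ∈ S)) →
      (¬ ∃ S T : Finset V, Disjoint S T ∧ S.card = Δ ∧ T.card = Δ ∧
          (∀ a ∈ S, ∀ b : V, (H a b ↔ b ∈ T)) ∧
          (∀ a ∈ T, ∀ b : V, (H a b ↔ b ∈ S))) →
      Fintype.card {f : Fin 4 → V //
          (∀ a b, pathAdj 4 a b → H (f a) (f b)) ∧ f 0 = u ∧ f 3 = v} < Δ ^ 2) := by
  classical
  set N : V → Finset V := fun x => univ.filter (H x) with hN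
  have hmemN : ∀ a b : V, b ∈ N a ↔ H a b := by
    intro a b; simp [hN]
  have hdegle : ∀ x, (N x).card ≤ Δ := by
    intro x
    rw [hΔ]
    exact Finset.le_sup (f := hdeg H) (Finset.mem_univ x)
  have hcard : Fintype.card {f : Fin 4 → V //
      (∀ a b, pathAdj 4 a b → H (f a) (f b)) ∧ f 0 = u ∧ f 3 = v}
      = (univ.filter fun p : V × V => H u p.1 ∧ H p.1 p.2 ∧ H p.2 v).card := by
    rw [← Fintype.card_subtype]
    exact Fintype.card_congr (p4Equiv H hsym u v)
  have hbound : Fintype.card {f : Fin 4 → V //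
      (∀ a b, pathAdj 4 a b → H (f a) (f b)) ∧ f 0 = u ∧ f 3 = v} ≤ Δ ^ 2 := by
    rw [hcard, sum_count H hsym u v]
    calc ∑ a ∈ N u, (N a ∩ N v).card ≤ ∑ a ∈ N u, Δ :=
          Finset.sum_le_sum fun a _ =>
            le_trans (Finset.card_le_card Finset.inter_subset_left) (hdegle a)
      _ = (N u).card * Δ := by rw [Finset.sum_const, smul_eq_mul]
      _ ≤ Δ * Δ := Nat.mul_le_mul_right Δ (hdegle u)
      _ = Δ ^ 2 := (sq Δ).symm
  refine ⟨hbound, fun hloop hbip => ?_⟩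
  by_contra hnot
  have heq : (univ.filter fun p : V × V => H u p.1 ∧ H p.1 p.2 ∧ H p.2 v).card = Δ ^ 2 := by
    rw [← hcard]
    exact le_antisymm hbound (not_lt.mp hnot)
  rcases Nat.eq_zero_or_pos Δ with hΔ0 | hΔpos
  · exact hloop ⟨∅, by simp [hΔ0], fun a ha => absurd ha (Finset.notMem_empty a)⟩
  have key1 := aux_count N Δ hΔpos hdegle u v (by rw [← sum_count H hsym u v]; exact heq)
  have key2 := aux_count N Δ hΔpos hdegle v u (by rw [← sum_count' H hsym u v]; exact heq)
  by_cases hAW : N u = N v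
  · refine hloop ⟨N u, key1.1, fun a ha b => ?_⟩
    rw [← hmemN a b, key1.2 a ha, hAW]
  · refine hbip ⟨N u, N v, ?_, key1.1, key2.1, ?_, ?_⟩
    · rw [Finset.disjoint_left]
      intro x hxu hxv
      exact hAW ((key2.2 x hxv).symm.trans (key1.2 x hxu))
    · intro a ha b
      rw [← hmemN a b, key1.2 a ha]
    · intro a ha b
      rw [← hmemN a b, key2.2 a ha]
end

section
/- Suppose H is a finite graph with maximum degree Δ satisfying max{hom(C_3,H)^{1/3}, hom(C_4,H)^{1/4}} < Δ. Then for every k ≥ 4 and all vertices u, v of H, the number of homomorphisms from the path P_k on k vertices to H mapping the initial vertex to u and the terminal vertex to v is strictly less than Δ^{k-2}. -/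
/-!
Let `A` be the adjacency matrix of `H`, with eigenvalues `μᵢ` and orthonormal eigenvectors `Uᵢ`.
Homomorphisms of `P_k` with prescribed ends are walks, counted by `(A ^ (k - 1)) u v`, and
`hom(C₄, H) = tr A⁴ = ∑ μᵢ⁴`, so every `|μᵢ|` is at most `c = hom(C₄, H) ^ (1/4) < Δ`. In
`(A ^ (k - 1)) u v = ∑ μᵢ ^ (k - 3) (μᵢ Uᵤᵢ) (μᵢ Uᵥᵢ)` the first factor is at most `c ^ (k - 3)`, and
by AM-GM the rest sums to at most the mean of `(A²) u u = deg u` and `(A²) v v = deg v`, hence to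
at most `Δ`. So the count is at most `c ^ (k - 3) Δ < Δ ^ (k - 2)`.
-/

open Finset

namespace Matrix.IsHermitian

variable {n : Type*} [Fintype n] [DecidableEq n] {A : Matrix n n ℝ} (hA : A.IsHermitian)

theorem spectral_theorem_pow (m : ℕ) :
    A ^ m = (hA.eigenvectorUnitary : Matrix n n ℝ) * diagonal (hA.eigenvalues ^ m) *
      star (hA.eigenvectorUnitary : Matrix n n ℝ) := by
  conv_lhs => rw [hA.spectral_theorem]
  rw [← map_pow, diagonal_pow, Unitary.conjStarAlgAut_apply]
  rfl

theorem pow_apply (m : ℕ) (u v : n) :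
    (A ^ m) u v = ∑ i, hA.eigenvalues i ^ m *
      ((hA.eigenvectorUnitary : Matrix n n ℝ) u i * (hA.eigenvectorUnitary : Matrix n n ℝ) v i) := by
  rw [hA.spectral_theorem_pow, mul_apply]
  simp only [mul_diagonal, star_apply, star_trivial, Pi.pow_apply]
  exact sum_congr rfl fun i _ => by ring

theorem trace_pow (m : ℕ) : (A ^ m).trace = ∑ i, hA.eigenvalues i ^ m := by
  rw [hA.spectral_theorem_pow, trace_mul_cycle, Unitary.coe_star_mul_self, one_mul, trace_diagonal]
  rfl

theorem abs_eigenvalues_le_trace_pow_rpow_inv (i : n) {m : ℕ} (hm : Even m) (hm0 : m ≠ 0) :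
    |hA.eigenvalues i| ≤ (A ^ m).trace ^ (m : ℝ)⁻¹ := by
  have hle : |hA.eigenvalues i| ^ m ≤ (A ^ m).trace := by
    rw [hm.pow_abs, hA.trace_pow]
    exact single_le_sum (fun j _ => hm.pow_nonneg _) (mem_univ i)
  rw [Real.le_rpow_inv_iff_of_pos (abs_nonneg _) ((by positivity : (0 : ℝ) ≤ _).trans hle)
    (by positivity), Real.rpow_natCast]
  exact hle

theorem pow_add_two_apply_le {c D : ℝ} (hc : ∀ i, |hA.eigenvalues i| ≤ c)
    (hD : ∀ w, (A ^ 2) w w ≤ D) (m : ℕ) (u v : n) : (A ^ (m + 2)) u v ≤ c ^ m * D := by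
  set μ := hA.eigenvalues
  set U : Matrix n n ℝ := ↑hA.eigenvectorUnitary
  have hc0 : 0 ≤ c := (abs_nonneg _).trans (hc u)
  have hsq : ∀ w, (A ^ 2) w w = ∑ i, (μ i * U w i) ^ 2 := fun w => by
    rw [hA.pow_apply]; exact sum_congr rfl fun i _ => by ring
  have hterm : ∀ i, μ i ^ (m + 2) * (U u i * U v i) ≤
      c ^ m * (((μ i * U u i) ^ 2 + (μ i * U v i) ^ 2) / 2) := fun i => by
    have hamgm : |μ i * U u i| * |μ i * U v i| ≤ ((μ i * U u i) ^ 2 + (μ i * U v i) ^ 2) / 2 := by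
      nlinarith [two_mul_le_add_sq |μ i * U u i| |μ i * U v i|, sq_abs (μ i * U u i),
        sq_abs (μ i * U v i)]
    calc μ i ^ (m + 2) * (U u i * U v i)
        = μ i ^ m * ((μ i * U u i) * (μ i * U v i)) := by ring
      _ ≤ |μ i ^ m * ((μ i * U u i) * (μ i * U v i))| := le_abs_self _
      _ = |μ i| ^ m * (|μ i * U u i| * |μ i * U v i|) := by rw [abs_mul, abs_mul, abs_pow]
      _ ≤ c ^ m * (((μ i * U u i) ^ 2 + (μ i * U v i) ^ 2) / 2) := by
          gcongr
          exact hc i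
  calc (A ^ (m + 2)) u v
      ≤ ∑ i, c ^ m * (((μ i * U u i) ^ 2 + (μ i * U v i) ^ 2) / 2) := by
        rw [hA.pow_apply]; exact sum_le_sum fun i _ => hterm i
    _ = c ^ m * (((A ^ 2) u u + (A ^ 2) v v) / 2) := by
        rw [← mul_sum, ← sum_div, sum_add_distrib, hsq, hsq]
    _ ≤ c ^ m * D := by
        gcongr
        linarith [hD u, hD v]

end Matrix.IsHermitian

section adjMat

variable {V : Type*} {H : V → V → Prop}

theorem pathAdj_hom_iff (hsym : ∀ a b, H a b → H b a) {m : ℕ} (f : Fin (m + 1) → V) :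
    (∀ a b, pathAdj (m + 1) a b → H (f a) (f b)) ↔ ∀ i : Fin m, H (f i.castSucc) (f i.succ) := by
  refine ⟨fun h i => h _ _ (Or.inl rfl), fun h a b hab => ?_⟩
  have hstep : ∀ a b : Fin (m + 1), a.val + 1 = b.val → H (f a) (f b) := fun a b hab => by
    have ha : a.val < m := by omega
    simpa [Fin.ext_iff, hab] using h ⟨a.val, ha⟩
  rcases hab with hab | hab
  · exact hstep a b hab
  · exact hsym _ _ (hstep b a hab)

theorem cycAdj_four_hom_iff (hsym : ∀ a b, H a b → H b a) (f : Fin 4 → V) :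
    (∀ a b, cycAdj 4 a b → H (f a) (f b)) ↔
      H (f 0) (f 1) ∧ H (f 1) (f 2) ∧ H (f 2) (f 3) ∧ H (f 3) (f 0) := by
  refine ⟨fun h => ⟨h 0 1 (by decide), h 1 2 (by decide), h 2 3 (by decide), h 3 0 (by decide)⟩,
    fun ⟨h01, h12, h23, h30⟩ a b hab => ?_⟩
  fin_cases a <;> fin_cases b <;>
    first | exact absurd hab (by decide) | assumption | exact hsym _ _ ‹_›

variable [Fintype V] [DecidableRel H]

theorem adjMat_isHermitian (hsym : ∀ a b, H a b → H b a) : (adjMat H).IsHermitian := by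
  ext i j
  simp only [Matrix.conjTranspose_apply, adjMat, star_trivial]
  exact if_congr ⟨hsym j i, hsym i j⟩ rfl rfl

variable [DecidableEq V]

theorem adjMat_pow_apply (m : ℕ) (u v : V) :
    (adjMat H ^ m) u v = Fintype.card {f : Fin (m + 1) → V //
      (∀ i : Fin m, H (f i.castSucc) (f i.succ)) ∧ f 0 = u ∧ f (Fin.last m) = v} := by
  rw [Fintype.card_subtype, natCast_card_filter]
  induction m generalizing u with
  | zero =>
    rw [pow_zero, Matrix.one_apply, ← (Equiv.funUnique (Fin 1) V).symm.sum_comp]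
    simp only [Equiv.funUnique_symm_apply, Fin.last, IsEmpty.forall_iff, true_and]
    by_cases h : u = v
    · simp [h]
    · rw [if_neg h, eq_comm]
      exact sum_eq_zero fun w _ => if_neg fun ⟨hwu, hwv⟩ => h (hwu ▸ hwv)
  | succ m ih =>
    rw [pow_succ', Matrix.mul_apply, ← (Fin.consEquiv fun _ => V).sum_comp, Fintype.sum_prod_type]
    simp only [Fin.consEquiv_apply, Fin.forall_fin_succ, Fin.cons_zero, ← Fin.succ_last,
      Fin.cons_succ, ih, mul_sum, Fin.castSucc_zero, ← Fin.succ_castSucc]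
    rw [Fintype.sum_eq_single u fun a ha => sum_eq_zero fun g _ => if_neg fun h => ha h.2.1,
      sum_comm]
    refine sum_congr rfl fun g _ => ?_
    rw [Fintype.sum_eq_single (g 0) fun x hx => by simp [Ne.symm hx]]
    by_cases hu : H u (g 0) <;> simp [adjMat, hu]

theorem adjMat_sq_apply_self (hsym : ∀ a b, H a b → H b a) (u : V) :
    (adjMat H ^ 2) u u = hdeg H u := by
  rw [pow_two, Matrix.mul_apply, hdeg, natCast_card_filter]
  refine sum_congr rfl fun w _ => ?_
  by_cases h : H u w
  · simp [adjMat, h, hsym _ _ h]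
  · simp [adjMat, h]

theorem adjMat_pow_apply_eq_card_pathHom (hsym : ∀ a b, H a b → H b a) (m : ℕ) (u v : V) :
    (adjMat H ^ m) u v = Fintype.card {f : Fin (m + 1) → V //
      (∀ a b, pathAdj (m + 1) a b → H (f a) (f b)) ∧ f 0 = u ∧ f (Fin.last m) = v} := by
  rw [adjMat_pow_apply]
  exact_mod_cast Fintype.card_congr
    (Equiv.subtypeEquivRight fun f => by rw [pathAdj_hom_iff hsym])

theorem homCount_cycAdj_four (hsym : ∀ a b, H a b → H b a) :
    (HomCount (cycAdj 4) H : ℝ) = (adjMat H ^ 4).trace := by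
  let e : (Fin 4 → V) ≃ V × V × V × V :=
    ⟨fun f => (f 0, f 1, f 2, f 3), fun p => ![p.1, p.2.1, p.2.2.1, p.2.2.2],
      fun f => by ext i; fin_cases i <;> rfl, fun _ => rfl⟩
  rw [HomCount, Fintype.card_subtype, natCast_card_filter, ← e.symm.sum_comp]
  simp only [Fintype.sum_prod_type, Matrix.trace, Matrix.diag_apply, pow_succ', pow_zero, mul_one,
    Matrix.mul_apply, mul_sum]
  refine sum_congr rfl fun a _ => sum_congr rfl fun b _ => sum_congr rfl fun c _ =>
    sum_congr rfl fun d _ => ?_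
  rw [if_congr (cycAdj_four_hom_iff hsym _) rfl rfl]
  change (if H a b ∧ H b c ∧ H c d ∧ H d a then (1 : ℝ) else 0) = _
  simp only [adjMat, ite_zero_mul_ite_zero, mul_one]

end adjMat

/-- if `max{hom(C₃,H)^{1/3}, hom(C₄,H)^{1/4}} < Δ`, then for every
`k ≥ 4` and vertices `u, v`, the number of homomorphisms of the path `P_k`
sending its initial vertex to `u` and its terminal vertex to `v` is strictly
less than `Δ^{k-2}`. -/
theorem path_endpoint_hom_strict_bound {V : Type*} [Fintype V] [DecidableEq V]
    (H : V → V → Prop) [DecidableRel H] (hsym : ∀ a b, H a b → H b a)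
    (Δ : ℕ) (hΔ : Δ = Finset.univ.sup (hdeg H))
    (hcond : max ((HomCount (cycAdj 3) H : ℝ) ^ ((3 : ℝ)⁻¹))
        ((HomCount (cycAdj 4) H : ℝ) ^ ((4 : ℝ)⁻¹)) < (Δ : ℝ))
    (k : ℕ) (hk : 4 ≤ k) (u v : V) :
    Fintype.card {f : Fin k → V //
        (∀ a b, pathAdj k a b → H (f a) (f b)) ∧
          f ⟨0, by omega⟩ = u ∧ f ⟨k - 1, by omega⟩ = v} < Δ ^ (k - 2) := by
  obtain ⟨m, rfl⟩ : ∃ m, k = m + 4 := ⟨k - 4, by omega⟩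
  have hA := adjMat_isHermitian hsym
  set c := (HomCount (cycAdj 4) H : ℝ) ^ ((4 : ℝ)⁻¹)
  have hc : ∀ i, |hA.eigenvalues i| ≤ c := fun i => by
    simpa [c, homCount_cycAdj_four hsym] using
      hA.abs_eigenvalues_le_trace_pow_rpow_inv i (m := 4) (by decide) (by decide)
  have hdegΔ : ∀ w, (adjMat H ^ 2) w w ≤ Δ := fun w => by
    rw [adjMat_sq_apply_self hsym, hΔ]
    exact_mod_cast le_sup (mem_univ w)
  have hcΔ : c < Δ := (le_max_right _ _).trans_lt hcond
  have hc0 : 0 ≤ c := by positivity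
  have hcount := (adjMat_pow_apply_eq_card_pathHom hsym (m + 3) u v).symm.trans_le
    (hA.pow_add_two_apply_le hc hdegΔ (m + 1) u v)
  have hlt : c ^ (m + 1) * Δ < (Δ : ℝ) ^ (m + 2) := by
    rw [pow_succ _ (m + 1)]
    exact mul_lt_mul_of_pos_right (pow_lt_pow_left₀ hcΔ hc0 (by omega)) (hc0.trans_lt hcΔ)
  exact_mod_cast hcount.trans_lt hlt
end

section
/- Let G be an n-vertex graph with minimum degree 1 and let H ≠ K_Δ^loop be a finite graph without isolated vertices whose maximum degree Δ satisfies Σ_{v∈V(H)} d(v) ≥ Δ^2. Then hom(G, H) ≤ hom(K_2, H)^{n/2} = (Σ_{v∈V(H)} d(v))^{n/2}. -/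
open Finset

/-!
Every graph without isolated vertices has a spanning star forest: an edge-minimal spanning
subgraph without isolated vertices has a pendant endpoint on every edge. Dropping the other
edges of `G` only increases `hom(G, H)`, so `hom(G, H) ≤ ∏ hom(K_{1,ℓ}, H) = ∏ ∑ₓ d(x)^ℓ`
over the stars `K_{1,ℓ}`, `ℓ ≥ 1`. Since `d(x) ≤ Δ ≤ √s` with `s = ∑ₓ d(x)`, each factor
is at most `s^{(ℓ-1)/2} · s = √s^{ℓ+1}`, and the exponents add up to the number `n` of vertices.
-/

namespace SimpleGraph

variable {α : Type*}

/-- The fixed points of `σ` are the centres of a spanning star forest of `G`, and `σ` sends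
every other vertex to the centre of its star. -/
structure IsStarForestMap (G : SimpleGraph α) (σ : α → α) : Prop where
  idem : ∀ v, σ (σ v) = σ v
  adj : ∀ v, σ v ≠ v → G.Adj (σ v) v
  exists_leaf : ∀ c, σ c = c → ∃ v, v ≠ c ∧ σ v = c

lemma IsStarForestMap.mono {G G' : SimpleGraph α} {σ : α → α} (hσ : G.IsStarForestMap σ)
    (h : G ≤ G') : G'.IsStarForestMap σ :=
  ⟨hσ.idem, fun v hv => h (hσ.adj v hv), hσ.exists_leaf⟩

lemma subsingleton_neighborSet_or_of_minimal {F : SimpleGraph α}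
    (hF : Minimal (fun F : SimpleGraph α => ∀ v, ∃ w, F.Adj v w) F) {u v : α}
    (huv : F.Adj u v) : (F.neighborSet u).Subsingleton ∨ (F.neighborSet v).Subsingleton := by
  by_contra! h
  obtain ⟨hu, hv⟩ : (F.neighborSet u).Nontrivial ∧ (F.neighborSet v).Nontrivial := by
    simpa only [Set.not_subsingleton_iff] using h
  set F' := F.deleteEdges {s(u, v)}
  have hF' : ∀ x, ∃ w, F'.Adj x w := by
    intro x
    by_cases hxu : x = u
    · obtain ⟨w, hw : F.Adj u w, hwv⟩ := hu.exists_ne v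
      exact ⟨w, by simp [F', hxu, hw, hwv, huv.ne]⟩
    by_cases hxv : x = v
    · obtain ⟨w, hw : F.Adj v w, hwu⟩ := hv.exists_ne u
      exact ⟨w, by simp [F', hxv, hw, hwu, huv.ne.symm]⟩
    obtain ⟨w, hxw⟩ := hF.prop x
    exact ⟨w, by simp [F', hxw, hxu, hxv]⟩
  have := hF.2 hF' (deleteEdges_le _) huv
  simp [F'] at this

lemma exists_isStarForestMap_of_adj_subsingleton [LinearOrder α] {F : SimpleGraph α}
    (hiso : ∀ v, ∃ w, F.Adj v w)
    (hpend : ∀ u v, F.Adj u v →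
      (F.neighborSet u).Subsingleton ∨ (F.neighborSet v).Subsingleton) :
    ∃ σ, F.IsStarForestMap σ := by
  classical
  choose nb hnb using hiso
  have eq_nb {u w : α} (hu : (F.neighborSet u).Subsingleton) (hw : F.Adj u w) : w = nb u :=
    hu hw (hnb u)
  -- A pendant vertex is a leaf, except that of the two ends of a `K₂` component only the larger is.
  let IsLeaf : α → Prop := fun v =>
    (F.neighborSet v).Subsingleton ∧ ((F.neighborSet (nb v)).Subsingleton → nb v < v)
  have not_isLeaf_nb (v : α) (hv : IsLeaf v) : ¬ IsLeaf (nb v) := by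
    rintro ⟨hw, hlt⟩
    rw [← eq_nb hw (hnb v).symm] at hlt
    exact lt_asymm (hv.2 hw) (hlt hv.1)
  refine ⟨fun v => if IsLeaf v then nb v else v, ⟨fun v => ?_, fun v hv => ?_, fun c hc => ?_⟩⟩
  · by_cases hv : IsLeaf v <;> simp [hv, not_isLeaf_nb]
  · by_cases hl : IsLeaf v
    · simpa only [if_pos hl] using (hnb v).symm
    · simp [hl] at hv
  · have hcl : ¬ IsLeaf c := fun hl => (hnb c).ne (by simpa only [if_pos hl] using hc.symm)
    have hu : IsLeaf (nb c) := by
      by_cases hpc : (F.neighborSet c).Subsingleton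
      · obtain ⟨hpu, hnlt⟩ : (F.neighborSet (nb c)).Subsingleton ∧ ¬ nb c < c := by
          simpa [IsLeaf, hpc] using hcl
        refine ⟨hpu, fun _ => ?_⟩
        rw [← eq_nb hpu (hnb c).symm]
        exact lt_of_le_of_ne (not_lt.1 hnlt) (hnb c).ne
      · have hpu := (hpend _ _ (hnb c)).resolve_left hpc
        exact ⟨hpu, fun h => absurd (eq_nb hpu (hnb c).symm ▸ h) hpc⟩
    refine ⟨nb c, (hnb c).ne', ?_⟩
    simpa only [if_pos hu] using (eq_nb hu.1 (hnb c).symm).symm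

theorem exists_isStarForestMap [Finite α] [LinearOrder α] {G : SimpleGraph α}
    (h : ∀ v, ∃ w, G.Adj v w) : ∃ σ, G.IsStarForestMap σ := by
  obtain ⟨F, hFG, hF⟩ :=
    exists_minimal_le_of_wellFoundedLT (fun F : SimpleGraph α => ∀ v, ∃ w, F.Adj v w) G h
  obtain ⟨σ, hσ⟩ := exists_isStarForestMap_of_adj_subsingleton hF.prop
    fun _ _ => subsingleton_neighborSet_or_of_minimal hF
  exact ⟨σ, hσ.mono hFG⟩

end SimpleGraph

section StarCounting

variable {α : Type*} [Fintype α] [DecidableEq α]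

def starCenters (σ : α → α) : Finset α := {c | σ c = c}

def starLeaves (σ : α → α) (c : α) : Finset α := {u | σ u = c ∧ u ≠ c}

lemma sum_card_starLeaves_add_one {σ : α → α} (idem : ∀ v, σ (σ v) = σ v) :
    ∑ c ∈ starCenters σ, (#(starLeaves σ c) + 1) = Fintype.card α := by
  rw [← card_univ,
    card_eq_sum_card_fiberwise (f := σ) (t := starCenters σ) (by simp [starCenters, idem])]
  refine sum_congr rfl fun c hc => ?_
  have hfiber : ({u | σ u = c} : Finset α) = insert c (starLeaves σ c) := by
    ext u
    by_cases hu : u = c <;> simp_all [starCenters, starLeaves]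
  rw [hfiber, card_insert_of_notMem (by simp [starLeaves])]

lemma SimpleGraph.IsStarForestMap.adj_of_mem_starLeaves {G : SimpleGraph α} {σ : α → α}
    (hσ : G.IsStarForestMap σ) {c u : α} (hu : u ∈ starLeaves σ c) : G.Adj c u := by
  obtain ⟨rfl, hne⟩ : σ u = c ∧ u ≠ c := by simpa [starLeaves] using hu
  exact hσ.adj u hne.symm

lemma SimpleGraph.IsStarForestMap.starLeaves_nonempty {G : SimpleGraph α} {σ : α → α}
    (hσ : G.IsStarForestMap σ) {c : α} (hc : c ∈ starCenters σ) : (starLeaves σ c).Nonempty := by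
  obtain ⟨v, hvc, hv⟩ := hσ.exists_leaf c (by simpa [starCenters] using hc)
  exact ⟨v, by simp [starLeaves, hv, hvc]⟩

theorem homCount_le_prod_sum_hdeg_pow {V : Type*} [Fintype V] [DecidableEq V]
    {G : SimpleGraph α} [DecidableRel G.Adj] (H : V → V → Prop) [DecidableRel H]
    {σ : α → α} (hσ : G.IsStarForestMap σ) :
    HomCount G.Adj H ≤ ∏ c ∈ starCenters σ, ∑ x, hdeg H x ^ #(starLeaves σ c) := by
  let restrict : {f : α → V // ∀ a b, G.Adj a b → H (f a) (f b)} →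
      Π c : starCenters σ, Σ x : V, (starLeaves σ c → {y // H x y}) :=
    fun f c => ⟨f.1 c, fun u => ⟨f.1 u, f.2 _ _ (hσ.adj_of_mem_starLeaves u.2)⟩⟩
  have restrict_injective : Function.Injective restrict := by
    intro f f' h
    apply Subtype.ext
    funext u
    by_cases hu : σ u = u
    · exact congrArg Sigma.fst (congrFun h ⟨u, by simpa [starCenters] using hu⟩)
    · have hc : σ u ∈ starCenters σ := by simp [starCenters, hσ.idem]
      have hl : u ∈ starLeaves σ (σ u) := by simpa [starLeaves] using Ne.symm hu
      exact congrArg (fun p => (p.2 ⟨u, hl⟩).1) (congrFun h ⟨σ u, hc⟩)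
  refine (Fintype.card_le_of_injective _ restrict_injective).trans_eq ?_
  rw [← prod_coe_sort]
  simp [Fintype.card_pi, Fintype.card_sigma, hdeg, Fintype.card_subtype]

end StarCounting

theorem homCount_edge_eq_sum_hdeg {V : Type*} [Fintype V] [DecidableEq V] (H : V → V → Prop)
    [DecidableRel H] (hsym : ∀ a b, H a b → H b a) :
    HomCount (fun i j : Fin 2 => i ≠ j) H = ∑ v, hdeg H v := by
  let e : {f : Fin 2 → V // ∀ a b, a ≠ b → H (f a) (f b)} ≃ Σ v, {w // H v w} :=
    { toFun := fun f => ⟨f.1 0, f.1 1, f.2 0 1 (by decide)⟩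
      invFun := fun p => ⟨![p.1, p.2.1], by
        intro a b hab
        fin_cases a <;> fin_cases b <;> simp_all [p.2.2, hsym _ _ p.2.2]⟩
      left_inv := fun f => by ext i; fin_cases i <;> rfl
      right_inv := fun p => rfl }
  rw [HomCount, Fintype.card_eq_nat_card, Nat.card_congr e, Nat.card_eq_fintype_card]
  simp [Fintype.card_sigma, hdeg, Fintype.card_subtype]

theorem sum_pow_le_sqrt_sum_pow {ι : Type*} (s : Finset ι) {f : ι → ℝ}
    (hf0 : ∀ i ∈ s, 0 ≤ f i) (hf : ∀ i ∈ s, f i ^ 2 ≤ ∑ j ∈ s, f j) {ℓ : ℕ} (hℓ : 1 ≤ ℓ) :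
    ∑ i ∈ s, f i ^ ℓ ≤ √(∑ i ∈ s, f i) ^ (ℓ + 1) := by
  obtain ⟨k, rfl⟩ := Nat.exists_eq_add_of_le' hℓ
  set S := ∑ j ∈ s, f j
  have hle : ∀ i ∈ s, f i ≤ √S := fun i hi => (le_abs_self _).trans (Real.abs_le_sqrt (hf i hi))
  calc ∑ i ∈ s, f i ^ (k + 1) = ∑ i ∈ s, f i ^ k * f i := by simp only [pow_succ]
    _ ≤ ∑ i ∈ s, √S ^ k * f i := sum_le_sum fun i hi =>
        mul_le_mul_of_nonneg_right (pow_le_pow_left₀ (hf0 i hi) (hle i hi) k) (hf0 i hi)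
    _ = √S ^ k * √S ^ 2 := by rw [← mul_sum, Real.sq_sqrt (sum_nonneg hf0)]
    _ = √S ^ (k + 1 + 1) := by ring

theorem min_degree_one_hom_bound_general {n : ℕ}
    (G : SimpleGraph (Fin n)) [DecidableRel G.Adj]
    (hmin : ∀ v, 1 ≤ G.degree v)
    {V : Type*} [Fintype V] [DecidableEq V]
    (H : V → V → Prop) [DecidableRel H] (hsym : ∀ a b, H a b → H b a)
    (Δ : ℕ) (hΔ : Δ = Finset.univ.sup (hdeg H))
    (hcond : Δ ^ 2 ≤ ∑ v : V, hdeg H v) :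
    (HomCount G.Adj H : ℝ) ≤
        (HomCount (fun i j : Fin 2 => i ≠ j) H : ℝ) ^ ((n : ℝ) / 2) ∧
      (HomCount (fun i j : Fin 2 => i ≠ j) H : ℝ) ^ ((n : ℝ) / 2) =
        ((∑ v : V, hdeg H v : ℕ) : ℝ) ^ ((n : ℝ) / 2) := by
  rw [homCount_edge_eq_sum_hdeg H hsym]
  refine ⟨?_, rfl⟩
  obtain ⟨σ, hσ⟩ := G.exists_isStarForestMap fun v => (G.degree_pos_iff_exists_adj v).1 (hmin v)
  have hdeg_sq (x : V) : (hdeg H x : ℝ) ^ 2 ≤ ∑ v, (hdeg H v : ℝ) := by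
    exact_mod_cast (Nat.pow_le_pow_left (hΔ ▸ le_sup (mem_univ x)) 2).trans hcond
  rw [Real.rpow_div_two_eq_sqrt _ (by positivity), Real.rpow_natCast, Nat.cast_sum]
  calc (HomCount G.Adj H : ℝ)
      ≤ ∏ c ∈ starCenters σ, ∑ x, (hdeg H x : ℝ) ^ #(starLeaves σ c) := by
        exact_mod_cast homCount_le_prod_sum_hdeg_pow H hσ
    _ ≤ ∏ c ∈ starCenters σ, √(∑ v, (hdeg H v : ℝ)) ^ (#(starLeaves σ c) + 1) :=
        prod_le_prod (fun _ _ => by positivity) fun c hc =>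
          sum_pow_le_sqrt_sum_pow _ (fun _ _ => by positivity) (fun x _ => hdeg_sq x)
            (hσ.starLeaves_nonempty hc).card_pos
    _ = √(∑ v, (hdeg H v : ℝ)) ^ n := by
        rw [prod_pow_eq_pow_sum, sum_card_starLeaves_add_one hσ.idem,
          Fintype.card_fin]

/-- if `G` has `n` vertices, minimum degree `1`, and
`H ≠ K_Δ^loop` has no isolated vertices with `∑ d(v) ≥ Δ²`, then
`hom(G,H) ≤ hom(K₂,H)^{n/2} = (∑ d(v))^{n/2}`. -/
theorem min_degree_one_hom_bound {n : ℕ} (hn : 2 ≤ n)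
    (G : SimpleGraph (Fin n)) [DecidableRel G.Adj]
    (hmin : ∀ v, 1 ≤ G.degree v)
    {V : Type*} [Fintype V] [DecidableEq V]
    (H : V → V → Prop) [DecidableRel H] (hsym : ∀ a b, H a b → H b a)
    (hiso : ∀ v, ∃ w, H v w)
    (Δ : ℕ) (hΔ : Δ = Finset.univ.sup (hdeg H))
    (hne : ¬ (Fintype.card V = Δ ∧ ∀ a b : V, H a b))
    (hcond : Δ ^ 2 ≤ ∑ v : V, hdeg H v) :
    (HomCount G.Adj H : ℝ) ≤
        (HomCount (fun i j : Fin 2 => i ≠ j) H : ℝ) ^ ((n : ℝ) / 2) ∧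
      (HomCount (fun i j : Fin 2 => i ≠ j) H : ℝ) ^ ((n : ℝ) / 2) =
        ((∑ v : V, hdeg H v : ℕ) : ℝ) ^ ((n : ℝ) / 2) :=
  min_degree_one_hom_bound_general G hmin H hsym Δ hΔ hcond
end
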